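/- arXiv:1910.07339 — 8 statements merged into one kernel-verified Lean document; each statement's English description precedes it below -/
import Mathlib

section
/- Let G be a finite simple graph with adjacency matrix A having eigenvalues λ₁ ≥ … ≥ λₙ. If S ⊆ V(G) is an independent set, then |S| ≤ n⁰(A) + min{n⁺(A), n⁻(A)}, where n⁺, n⁰, n⁻ denote the numbers of positive, zero, and negative eigenvalues of A (Cvetković's inertia bound). -/
/-!
An independent set `S` spans a coordinate subspace on which the quadratic form `x ↦ xᵀ A x`
vanishes identically, so it meets every subspace on which the form is positive definite, or
negative definite, only in `0`. By Sylvester's law of inertia the largest such subspaces have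
dimensions `n⁺(A)` and `n⁻(A)`, hence `|S| ≤ n - n⁺(A)` and `|S| ≤ n - n⁻(A)`.
-/

open Matrix Finset QuadraticMap QuadraticForm

lemma Matrix.toQuadraticForm'_comp_toLin' {n R : Type*} [Fintype n] [DecidableEq n] [CommRing R]
    (M P : Matrix n n R) :
    M.toQuadraticForm'.comp (toLin' P) = (Pᵀ * M * P).toQuadraticForm' := by
  rw [toQuadraticForm', toQuadraticForm', ← toLinearMap₂'_comp]
  rfl

lemma Matrix.toQuadraticForm'_diagonal {n R : Type*} [Fintype n] [DecidableEq n] [CommRing R]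
    (w : n → R) : (diagonal w).toQuadraticForm' = weightedSumSquares R w := by
  ext x
  simp only [toQuadraticForm', LinearMap.BilinMap.toQuadraticMap_apply, toLinearMap₂'_apply',
    mulVec_diagonal, weightedSumSquares_apply, smul_eq_mul, dotProduct]
  exact Finset.sum_congr rfl fun i _ => by ring

lemma Matrix.IsHermitian.equivalent_weightedSumSquares_eigenvalues {n : Type*} [Fintype n]
    [DecidableEq n] {A : Matrix n n ℝ} (hA : A.IsHermitian) :
    A.toQuadraticForm'.Equivalent (weightedSumSquares ℝ hA.eigenvalues) := by
  let U := hA.eigenvectorUnitary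
  have hdiag : (U : Matrix n n ℝ)ᵀ * A * U = diagonal hA.eigenvalues := by
    simpa [Unitary.conjStarAlgAut_star_apply, star_eq_conjTranspose] using
      hA.conjStarAlgAut_star_eigenvectorUnitary
  have hcomp : A.toQuadraticForm'.comp (UnitaryGroup.toLinearEquiv U : (n → ℝ) →ₗ[ℝ] n → ℝ) =
      weightedSumSquares ℝ hA.eigenvalues := by
    rw [← toQuadraticForm'_diagonal, ← hdiag, ← toQuadraticForm'_comp_toLin']
    rfl
  exact hcomp ▸ ⟨isometryEquivOfCompLinearEquiv _ _⟩

lemma QuadraticForm.sigNeg_add_finrank_le_of_nonneg {𝕜 M : Type*} [Field 𝕜] [LinearOrder 𝕜]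
    [IsOrderedRing 𝕜] [AddCommGroup M] [Module 𝕜 M] [FiniteDimensional 𝕜 M] {Q : QuadraticForm 𝕜 M}
    {W : Subspace 𝕜 M} (hW : ∀ x ∈ W, 0 ≤ Q x) :
    sigNeg Q + Module.finrank 𝕜 W ≤ Module.finrank 𝕜 M :=
  sigPos_add_finrank_le_of_nonpos (Q := -Q) fun x hx => neg_nonpos.mpr (hW x hx)

lemma SimpleGraph.toQuadraticForm'_adjMatrix_eq_zero_of_isIndepSet {V R : Type*} [Fintype V]
    [DecidableEq V] [CommRing R] {G : SimpleGraph V} [DecidableRel G.Adj] {s : Set V}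
    (hs : G.IsIndepSet s) {x : V → R} (hx : x ∈ Pi.spanSubset R s) :
    (G.adjMatrix R).toQuadraticForm' x = 0 := by
  rw [Pi.mem_spanSubset_iff] at hx
  simp only [toQuadraticForm', LinearMap.BilinMap.toQuadraticMap_apply, toLinearMap₂'_apply]
  refine Finset.sum_eq_zero fun u _ => Finset.sum_eq_zero fun v _ => ?_
  by_cases hu : u ∈ s
  · by_cases hv : v ∈ s
    · by_cases huv : u = v
      · simp [huv]
      · simp [adjMatrix_apply, hs hu hv huv]
    · simp [hx v hv]
  · simp [hx u hu]

lemma Finset.card_filter_eq_zero_add_card_filter_pos_add_card_filter_neg {ι α : Type*}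
    [Fintype ι] [LinearOrder α] [Zero α] (f : ι → α) :
    #{i | f i = 0} + #{i | 0 < f i} + #{i | f i < 0} = Fintype.card ι := by
  classical
  rw [← card_union_of_disjoint, ← card_union_of_disjoint, ← card_univ]
  · congr 1
    ext i
    simp only [mem_union, mem_filter, mem_univ, true_and, iff_true]
    exact (lt_trichotomy (f i) 0).symm
  all_goals
    simp only [disjoint_left, mem_union, mem_filter, mem_univ, true_and]
    intro i
    grind

/-- Cvetković's inertia bound. If `S` is an independent set of a
finite simple graph `G`, then `|S| ≤ n⁰(A) + min {n⁺(A), n⁻(A)}` where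
`(n⁺, n⁰, n⁻)` is the inertia of the adjacency matrix `A`. -/
theorem inertia_bound_indep_set {V : Type*} [Fintype V] [DecidableEq V]
    (G : SimpleGraph V) [DecidableRel G.Adj]
    (hA : (G.adjMatrix ℝ).IsHermitian)
    (S : Finset V) (hS : ∀ u ∈ S, ∀ v ∈ S, ¬ G.Adj u v) :
    S.card ≤ (univ.filter fun i => hA.eigenvalues i = 0).card +
      min (univ.filter fun i => 0 < hA.eigenvalues i).card
          (univ.filter fun i => hA.eigenvalues i < 0).card := by
  set Q := (G.adjMatrix ℝ).toQuadraticForm'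
  have hQ := hA.equivalent_weightedSumSquares_eigenvalues
  have hvanish : ∀ x ∈ Pi.spanSubset ℝ (S : Set V), Q x = 0 := fun x hx =>
    SimpleGraph.toQuadraticForm'_adjMatrix_eq_zero_of_isIndepSet
      (fun u hu v hv _ => hS u hu v hv) hx
  have hpos := sigPos_add_finrank_le_of_nonpos fun x hx => (hvanish x hx).le
  have hneg := sigNeg_add_finrank_le_of_nonneg fun x hx => (hvanish x hx).ge
  rw [sigPos_of_equiv_weightedSumSquares hQ] at hpos
  rw [sigNeg_of_equiv_weightedSumSquares hQ] at hneg
  simp only [Pi.dim_spanSubset, Set.ncard_coe_finset, Module.finrank_fintype_fun_eq_card]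
    at hpos hneg
  simp only [Set.ncard_eq_toFinset_card', Set.toFinset_ofPred] at hpos hneg
  have := card_filter_eq_zero_add_card_filter_pos_add_card_filter_neg hA.eigenvalues
  omega
end

section
/- Let G be a Δ-regular graph on n vertices with adjacency matrix A having smallest eigenvalue λₙ < 0. Then the independence number satisfies α(G) ≤ n|λₙ|/(Δ + |λₙ|) (the Hoffman ratio bound). -/
/-!
Test the Rayleigh bound `λₙ ‖x‖² ≤ xᵀ A x` on `x = n 𝟙_S - |S| 𝟙` for an independent set `S`,
a multiple of the projection of `𝟙_S` orthogonal to the Perron eigenvector `𝟙`. Independence kills `𝟙_Sᵀ A 𝟙_S`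
and regularity gives `A 𝟙 = Δ 𝟙`, so `xᵀ A x = -Δ n |S|²` while `‖x‖² = n |S| (n - |S|)`.
Dividing by `n |S|` leaves `λₙ (n - |S|) ≤ -Δ |S|`, which rearranges to the ratio bound.
-/

open Matrix Finset

/-- The independence number of a graph. -/
noncomputable def indepNum {V : Type*} [Fintype V] (G : SimpleGraph V) : ℕ :=
  sSup {n : ℕ | ∃ S : Finset V,
    (∀ u ∈ S, ∀ v ∈ S, ¬ G.Adj u v) ∧ S.card = n}

namespace Matrix.IsHermitian

open scoped ComplexOrder

variable {n 𝕜 : Type*} [Fintype n] [DecidableEq n] [RCLike 𝕜] {A : Matrix n n 𝕜}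

theorem posSemidef_sub_smul_one (hA : A.IsHermitian) {c : ℝ} (hc : ∀ i, c ≤ hA.eigenvalues i) :
    (A - (c : 𝕜) • 1).PosSemidef := by
  have hshift : A - (c : 𝕜) • 1 = Unitary.conjStarAlgAut 𝕜 _ hA.eigenvectorUnitary
      (diagonal fun i => ((hA.eigenvalues i - c : ℝ) : 𝕜)) := by
    have hc1 : (c : 𝕜) • (1 : Matrix n n 𝕜) =
        Unitary.conjStarAlgAut 𝕜 _ hA.eigenvectorUnitary ((c : 𝕜) • 1) := by
      simp
    rw [hc1]
    nth_rw 1 [hA.spectral_theorem]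
    rw [← map_sub, smul_one_eq_diagonal, diagonal_sub]
    simp
  rw [hshift, Unitary.conjStarAlgAut_apply,
    Unitary.isUnit_coe.posSemidef_star_right_conjugate_iff, posSemidef_diagonal_iff]
  simpa using hc

theorem mul_dotProduct_le_dotProduct_mulVec (hA : A.IsHermitian) {c : ℝ}
    (hc : ∀ i, c ≤ hA.eigenvalues i) (x : n → 𝕜) :
    (c : 𝕜) * (star x ⬝ᵥ x) ≤ star x ⬝ᵥ (A *ᵥ x) := by
  have := (hA.posSemidef_sub_smul_one hc).dotProduct_mulVec_nonneg x
  rwa [sub_mulVec, smul_mulVec, one_mulVec, dotProduct_sub, dotProduct_smul, smul_eq_mul,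
    sub_nonneg] at this

end Matrix.IsHermitian

namespace Finset

variable {V R : Type*} [Fintype V]

theorem indicator_one_dotProduct [NonAssocSemiring R] (S : Finset V) (w : V → R) :
    (S : Set V).indicator 1 ⬝ᵥ w = ∑ v ∈ S, w v := by
  simpa [dotProduct] using
    sum_indicator_subset_of_eq_zero 1 (fun v a => a * w v) S.subset_univ fun _ => zero_mul _

theorem dotProduct_self_smul_indicator_sub_smul_one [CommRing R] (S : Finset V) (a b : R) :
    (a • (S : Set V).indicator 1 - b • 1) ⬝ᵥ (a • (S : Set V).indicator 1 - b • 1)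
      = a ^ 2 * S.card - 2 * a * b * S.card + b ^ 2 * Fintype.card V := by
  have hSS : (S : Set V).indicator 1 ⬝ᵥ (S : Set V).indicator (1 : V → R) = S.card := by
    rw [S.indicator_one_dotProduct,
      sum_congr rfl fun v hv => Set.indicator_of_mem (mem_coe.2 hv) 1]
    simp
  have hS1 : (S : Set V).indicator 1 ⬝ᵥ (1 : V → R) = S.card := by
    simp [S.indicator_one_dotProduct]
  have h1S : (1 : V → R) ⬝ᵥ (S : Set V).indicator 1 = S.card := by
    rw [dotProduct_comm, hS1]
  simp only [sub_dotProduct, dotProduct_sub, smul_dotProduct, dotProduct_smul, hSS, hS1, h1S,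
    one_dotProduct_one, smul_eq_mul]
  ring

end Finset

theorem exists_card_eq_indepNum {V : Type*} [Fintype V] (G : SimpleGraph V) :
    ∃ S : Finset V, (∀ u ∈ S, ∀ v ∈ S, ¬ G.Adj u v) ∧ S.card = indepNum G := by
  refine Nat.sSup_mem (s := {n | ∃ S : Finset V, (∀ u ∈ S, ∀ v ∈ S, ¬ G.Adj u v) ∧ S.card = n})
    ⟨0, ∅, by simp⟩ ⟨Fintype.card V, ?_⟩
  rintro _ ⟨S, -, rfl⟩
  exact S.card_le_univ

namespace SimpleGraph

variable {V R : Type*} [Fintype V] {G : SimpleGraph V} [DecidableRel G.Adj] {d : ℕ}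

theorem adjMatrix_mulVec_one_of_regular [NonAssocSemiring R] (hd : G.IsRegularOfDegree d) :
    G.adjMatrix R *ᵥ 1 = (d : R) • 1 := by
  ext v
  simp [hd v]

theorem dotProduct_adjMatrix_mulVec_comm [CommSemiring R] (x y : V → R) :
    x ⬝ᵥ (G.adjMatrix R *ᵥ y) = y ⬝ᵥ (G.adjMatrix R *ᵥ x) := by
  rw [dotProduct_mulVec, ← mulVec_transpose, transpose_adjMatrix, dotProduct_comm]

theorem indicator_dotProduct_adjMatrix_mulVec_indicator_eq_zero [NonAssocSemiring R]
    {S : Finset V} (hS : ∀ u ∈ S, ∀ v ∈ S, ¬ G.Adj u v) :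
    (S : Set V).indicator 1 ⬝ᵥ (G.adjMatrix R *ᵥ (S : Set V).indicator 1) = 0 := by
  rw [S.indicator_one_dotProduct]
  refine Finset.sum_eq_zero fun v hv => ?_
  rw [adjMatrix_mulVec_apply]
  refine Finset.sum_eq_zero fun u hu => Set.indicator_of_notMem ?_ _
  exact fun huS => hS v hv u huS (G.mem_neighborFinset v u |>.mp hu)

theorem indicator_dotProduct_adjMatrix_mulVec_one [CommSemiring R] (hd : G.IsRegularOfDegree d)
    (S : Finset V) : (S : Set V).indicator 1 ⬝ᵥ (G.adjMatrix R *ᵥ 1) = d * S.card := by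
  rw [adjMatrix_mulVec_one_of_regular hd, dotProduct_smul, S.indicator_one_dotProduct]
  simp

theorem dotProduct_adjMatrix_mulVec_of_indep [CommRing R] (hd : G.IsRegularOfDegree d)
    {S : Finset V} (hS : ∀ u ∈ S, ∀ v ∈ S, ¬ G.Adj u v) (a b : R) :
    (a • (S : Set V).indicator 1 - b • 1) ⬝ᵥ
        (G.adjMatrix R *ᵥ (a • (S : Set V).indicator 1 - b • 1))
      = d * b * (b * Fintype.card V - 2 * a * S.card) := by
  have hSS := indicator_dotProduct_adjMatrix_mulVec_indicator_eq_zero (R := R) hS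
  have hS1 := indicator_dotProduct_adjMatrix_mulVec_one (R := R) hd S
  have h1S : 1 ⬝ᵥ (G.adjMatrix R *ᵥ (S : Set V).indicator 1) = d * S.card := by
    rw [dotProduct_adjMatrix_mulVec_comm, hS1]
  have h11 := indicator_dotProduct_adjMatrix_mulVec_one (R := R) hd Finset.univ
  simp only [Finset.coe_univ, Set.indicator_univ, Finset.card_univ] at h11
  simp only [mulVec_sub, mulVec_smul, sub_dotProduct, dotProduct_sub, smul_dotProduct,
    dotProduct_smul, hSS, hS1, h1S, h11, smul_eq_mul]
  ring

theorem card_mul_sub_le_of_indep [DecidableEq V] (hd : G.IsRegularOfDegree d)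
    (hA : (G.adjMatrix ℝ).IsHermitian) {c : ℝ} (hc : ∀ i, c ≤ hA.eigenvalues i)
    {S : Finset V} (hS : ∀ u ∈ S, ∀ v ∈ S, ¬ G.Adj u v) (hne : S.Nonempty) :
    (S.card : ℝ) * (d - c) ≤ Fintype.card V * -c := by
  have hrayleigh := hA.mul_dotProduct_le_dotProduct_mulVec hc
    ((Fintype.card V : ℝ) • (S : Set V).indicator 1 - (S.card : ℝ) • 1)
  rw [star_trivial, S.dotProduct_self_smul_indicator_sub_smul_one,
    dotProduct_adjMatrix_mulVec_of_indep hd hS, RCLike.ofReal_real_eq_id, id] at hrayleigh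
  have hscaled : Fintype.card V * S.card * (c * (Fintype.card V - S.card)) ≤
      Fintype.card V * S.card * -(d * S.card : ℝ) := by
    linear_combination hrayleigh
  have hnonempty : Nonempty V := ⟨hne.choose⟩
  have hcancel := le_of_mul_le_mul_left hscaled (by positivity)
  linarith

end SimpleGraph

/-- the Hoffman ratio bound.  If `G` is `Δ`-regular on `n`
vertices and `lam` is the smallest adjacency eigenvalue, with `lam < 0`, then
`α(G) ≤ n * |lam| / (Δ + |lam|)`. -/
theorem hoffman_ratio_bound {V : Type*} [Fintype V] [DecidableEq V]
    (G : SimpleGraph V) [DecidableRel G.Adj] (Δ : ℕ)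
    (hreg : G.IsRegularOfDegree Δ)
    (hA : (G.adjMatrix ℝ).IsHermitian) (lam : ℝ)
    (hlam : IsLeast (Set.range hA.eigenvalues) lam) (hneg : lam < 0) :
    (indepNum G : ℝ) ≤ (Fintype.card V : ℝ) * |lam| / ((Δ : ℝ) + |lam|) := by
  obtain ⟨S, hS, hcard⟩ := exists_card_eq_indepNum G
  rw [← hcard, abs_of_neg hneg]
  have hden : (0 : ℝ) < Δ + -lam := by linarith [Nat.cast_nonneg (α := ℝ) Δ]
  rcases S.eq_empty_or_nonempty with rfl | hne
  · simp only [Finset.card_empty, Nat.cast_zero]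
    exact div_nonneg (mul_nonneg (Nat.cast_nonneg _) (neg_nonneg.2 hneg.le)) hden.le
  · rw [le_div_iff₀ hden]
    linarith [SimpleGraph.card_mul_sub_le_of_indep hreg hA (fun i => hlam.2 ⟨i, rfl⟩) hS hne]
end

section
/- Let G be a finite simple graph on n vertices with minimum degree δ, and let μ₁ be the largest eigenvalue of the Laplacian matrix L = D − A of G, with μ₁ > 0. Then α(G) ≤ n(μ₁ − δ)/μ₁ (van Dam–Haemers bound). -/
open Matrix Finset

/-! For a maximum independent set `S`, of size `α`, test the Rayleigh bound `xᵀ L x ≤ μ₁ ‖x‖²`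
on `x = 1_S - (α / n) 𝟙`. Since `L` kills constants, `xᵀ L x = 1_Sᵀ L 1_S`, which for an
independent set is the sum of the degrees over `S`, hence at least `δ α`; and centering shrinks
the norm to `‖x‖² = α (n - α) / n`. So `δ n ≤ μ₁ (n - α)`. -/

open scoped MatrixOrder in
lemma Matrix.IsHermitian.re_dotProduct_mulVec_le {n 𝕜 : Type*} [Fintype n] [DecidableEq n]
    [RCLike 𝕜] {A : Matrix n n 𝕜} (hA : A.IsHermitian) {μ : ℝ}
    (h : ∀ i, hA.eigenvalues i ≤ μ) (x : n → 𝕜) :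
    RCLike.re (star x ⬝ᵥ (A *ᵥ x)) ≤ μ * RCLike.re (star x ⬝ᵥ x) := by
  have hle : A ≤ algebraMap ℝ _ μ := by
    rw [le_algebraMap_iff_spectrum_le hA.isSelfAdjoint, hA.spectrum_real_eq_range_eigenvalues]
    rintro _ ⟨i, rfl⟩
    exact h i
  have := (Matrix.le_iff.1 hle).re_dotProduct_nonneg x
  rwa [Algebra.algebraMap_eq_smul_one, sub_mulVec, smul_mulVec, one_mulVec, dotProduct_sub,
    dotProduct_smul, map_sub, sub_nonneg, RCLike.smul_re] at this

lemma indepNum_eq_graph_indepNum {V : Type*} [Fintype V] (G : SimpleGraph V) :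
    indepNum G = G.indepNum := by
  unfold indepNum SimpleGraph.indepNum
  congr! 3 with n
  simp only [G.isNIndepSet_iff, G.isIndepSet_iff]
  refine exists_congr fun S => and_congr_left fun _ =>
    ⟨fun h u hu v hv _ => h u hu v hv, fun h u hu v hv huv => h hu hv (G.ne_of_adj huv) huv⟩

lemma sum_sq_indicator_sub_const {V : Type*} [Fintype V] [DecidableEq V] (S : Finset V) (c : ℝ) :
    ∑ v, ((if v ∈ S then 1 else 0) - c) ^ 2 = #S * (1 - 2 * c) + Fintype.card V * c ^ 2 := by
  have h (v : V) :
      ((if v ∈ S then 1 else 0) - c) ^ 2 = (if v ∈ S then 1 else 0) * (1 - 2 * c) + c ^ 2 := by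
    split_ifs <;> ring
  simp only [h, sum_add_distrib, ← sum_mul, sum_boole, sum_const, card_univ, nsmul_eq_mul,
    filter_mem_eq_inter, univ_inter]

namespace SimpleGraph

variable {V R : Type*} [Fintype V] [DecidableEq V] (G : SimpleGraph V) [DecidableRel G.Adj]

lemma dotProduct_lapMatrix_mulVec_sub_const [Field R] [CharZero R] (x : V → R) (c : R) :
    (x - fun _ => c) ⬝ᵥ (G.lapMatrix R *ᵥ (x - fun _ => c)) = x ⬝ᵥ (G.lapMatrix R *ᵥ x) := by
  simp only [← toLinearMap₂'_apply', lapMatrix_toLinearMap₂', Pi.sub_apply,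
    sub_sub_sub_cancel_right]

variable {G}

lemma IsIndepSet.dotProduct_lapMatrix_mulVec_indicator [CommRing R] {S : Finset V}
    (hS : G.IsIndepSet (S : Set V)) :
    (fun v => if v ∈ S then 1 else 0 : V → R) ⬝ᵥ
      (G.lapMatrix R *ᵥ fun v => if v ∈ S then 1 else 0) = ∑ u ∈ S, (G.degree u : R) := by
  simp only [dotProduct, ite_mul, one_mul, zero_mul, sum_ite_mem, univ_inter]
  refine sum_congr rfl fun u hu => ?_
  rw [lapMatrix_mulVec_apply, if_pos hu, mul_one, sub_eq_self]
  refine sum_eq_zero fun w hw => if_neg fun hwS => ?_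
  rw [mem_neighborFinset] at hw
  exact hS hu hwS (G.ne_of_adj hw) hw

theorem IsIndepSet.sum_degree_mul_card_le [Nonempty V] {S : Finset V}
    (hS : G.IsIndepSet (S : Set V)) (hL : (G.lapMatrix ℝ).IsHermitian) {μ : ℝ}
    (hμ : ∀ i, hL.eigenvalues i ≤ μ) :
    (∑ u ∈ S, (G.degree u : ℝ)) * Fintype.card V ≤ μ * #S * (Fintype.card V - #S) := by
  set n : ℝ := (Fintype.card V : ℝ)
  have hn : 0 < n := by positivity
  set x : V → ℝ := (fun v => if v ∈ S then 1 else 0) - fun _ => #S / n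
  have hquad : x ⬝ᵥ (G.lapMatrix ℝ *ᵥ x) = ∑ u ∈ S, (G.degree u : ℝ) := by
    rw [dotProduct_lapMatrix_mulVec_sub_const, hS.dotProduct_lapMatrix_mulVec_indicator]
  have hnorm : x ⬝ᵥ x = #S * (n - #S) / n := by
    rw [dotProduct]
    simp only [x, Pi.sub_apply, ← sq, sum_sq_indicator_sub_const]
    field_simp
    ring
  have hrayleigh := hL.re_dotProduct_mulVec_le hμ x
  simp only [star_trivial, RCLike.re_to_real, hquad, hnorm] at hrayleigh
  rw [← le_div_iff₀ hn]
  exact hrayleigh.trans_eq (by ring)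

end SimpleGraph

/-- the van Dam–Haemers bound.  If `μ` is the largest eigenvalue
of the Laplacian `L = D - A` of `G`, `μ > 0`, and `δ` is the minimum degree,
then `α(G) ≤ n (μ - δ) / μ`. -/
theorem vanDam_Haemers_bound {V : Type*} [Fintype V] [DecidableEq V]
    (G : SimpleGraph V) [DecidableRel G.Adj]
    (hL : (G.lapMatrix ℝ).IsHermitian) (μ : ℝ)
    (hμ : IsGreatest (Set.range hL.eigenvalues) μ) (hμpos : 0 < μ) :
    (indepNum G : ℝ) ≤ (Fintype.card V : ℝ) * (μ - (G.minDegree : ℝ)) / μ := by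
  obtain ⟨S, hS⟩ := G.exists_isNIndepSet_indepNum
  rw [indepNum_eq_graph_indepNum, ← hS.card_eq, le_div_iff₀ hμpos]
  rcases isEmpty_or_nonempty V with hV | hV
  · simp [Finset.eq_empty_of_isEmpty S]
  have hS_pos : (0 : ℝ) < #S := by
    obtain ⟨v⟩ := hV
    have := SimpleGraph.IsIndepSet.card_le_indepNum (G := G) (t := {v})
      (by simp [SimpleGraph.isIndepSet_iff])
    rw [card_singleton, ← hS.card_eq] at this
    exact_mod_cast this
  have hdeg : (G.minDegree : ℝ) * #S ≤ ∑ u ∈ S, (G.degree u : ℝ) := by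
    rw [mul_comm, ← nsmul_eq_mul]
    exact card_nsmul_le_sum _ _ _ fun u _ => by exact_mod_cast G.minDegree_le_degree u
  have hspectral := hS.isIndepSet.sum_degree_mul_card_le hL fun i => hμ.2 ⟨i, rfl⟩
  have hδ : (G.minDegree : ℝ) * #S * Fintype.card V ≤ μ * #S * (Fintype.card V - #S) :=
    (mul_le_mul_of_nonneg_right hdeg (Nat.cast_nonneg _)).trans hspectral
  refine le_of_mul_le_mul_left ?_ hS_pos
  linarith
end

section
/- Let G be a graph on n vertices with adjacency matrix A with eigenvalues λ₁ ≥ … ≥ λₙ, let k ≥ 1, and let p be a real polynomial of degree at most k. Set w(p) = min_u (p(A))_{uu} and W(p) = max_u (p(A))_{uu}. Then α_k(G) ≤ min{ |{i : p(λᵢ) ≥ w(p)}| , |{i : p(λᵢ) ≤ W(p)}| }. -/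
open Matrix Finset Polynomial

private lemma aeval_mulVec_eigen {V : Type*} [Fintype V] [DecidableEq V]
    {A : Matrix V V ℝ} (hA : A.IsHermitian) (q : Polynomial ℝ) (i : V) :
    (aeval A q) *ᵥ ⇑(hA.eigenvectorBasis i) =
      q.eval (hA.eigenvalues i) • ⇑(hA.eigenvectorBasis i) := by
  induction q using Polynomial.induction_on with
  | C a => simp [aeval_C, Algebra.algebraMap_eq_smul_one, smul_mulVec]
  | add f g hf hg => simp [add_mulVec, hf, hg, add_smul]
  | monomial n a ih =>
      have h1 : (C a * X ^ (n + 1)) = (C a * X ^ n) * X := by ring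
      rw [h1, _root_.map_mul, aeval_X, ← mulVec_mulVec, hA.mulVec_eigenvectorBasis,
        mulVec_smul, ih]
      simp [smul_smul]
      ring_nf

private lemma key_bound {V : Type*} [Fintype V] [DecidableEq V]
    (G : SimpleGraph V) [DecidableRel G.Adj]
    (hA : (G.adjMatrix ℝ).IsHermitian)
    (k : ℕ) (p : Polynomial ℝ) (hdeg : p.natDegree ≤ k)
    (w : ℝ)
    (hw : IsLeast (Set.range fun u : V => (aeval (G.adjMatrix ℝ) p) u u) w)
    (S : Finset V) (hS : ∀ u ∈ S, ∀ v ∈ S, u ≠ v → (k : ℕ∞) < G.edist u v) :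
    S.card ≤ (univ.filter fun i : V => w ≤ p.eval (hA.eigenvalues i)).card := by
  by_contra hcon
  push_neg at hcon
  set B := aeval (G.adjMatrix ℝ) p with hB
  set v : V → V → ℝ := fun i => ⇑(hA.eigenvectorBasis i) with hv
  -- off-diagonal entries of B on S vanish
  have hoff : ∀ u ∈ S, ∀ a ∈ S, u ≠ a → B u a = 0 := by
    intro u hu a ha hua
    rw [hB, aeval_eq_sum_range, Matrix.sum_apply]
    refine Finset.sum_eq_zero fun m hm => ?_
    rw [Matrix.smul_apply]
    have hz : ((G.adjMatrix ℝ) ^ m) u a = 0 := by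
      rw [SimpleGraph.adjMatrix_pow_apply_eq_card_walk]
      haveI hem : IsEmpty {q : G.Walk u a // q.length = m} := by
        constructor
        rintro ⟨q, hq⟩
        have h1 : G.edist u a ≤ (m : ℕ∞) := by
          have := G.edist_le q
          rwa [hq] at this
        have h2 := hS u hu a ha hua
        have hm' : m ≤ k := by
          have := Finset.mem_range.mp hm
          omega
        have h3 : (m : ℕ∞) ≤ (k : ℕ∞) := by exact_mod_cast hm'
        exact absurd (h2.trans_le (h1.trans h3)) (lt_irrefl _)
      haveI : IsEmpty ↑{q : G.Walk u a | q.length = m} := hem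
      norm_cast
      exact Fintype.card_eq_zero
    rw [hz, smul_zero]
  have hwle : ∀ u : V, w ≤ B u u := fun u => hw.2 (Set.mem_range_self u)
  -- a nonzero vector supported on S, orthogonal to eigenvectors with large p(λ)
  classical
  let L : (V → ℝ) →ₗ[ℝ]
      ({a : V // a ∉ S} → ℝ) × ({i : V // w ≤ p.eval (hA.eigenvalues i)} → ℝ) :=
    (LinearMap.funLeft ℝ ℝ Subtype.val).prod
      (LinearMap.pi fun i =>
        { toFun := fun x => v i.1 ⬝ᵥ x
          map_add' := fun x y => dotProduct_add _ _ _
          map_smul' := fun c x => by simpa using dotProduct_smul c (v i.1) x })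
  have hLnotinj : ¬ Function.Injective L := by
    intro hinj
    have hle := LinearMap.finrank_le_finrank_of_injective hinj
    rw [Module.finrank_pi, Module.finrank_prod, Module.finrank_pi, Module.finrank_pi] at hle
    have e1 : Fintype.card {a : V // a ∉ S} = Fintype.card V - S.card := by
      rw [Fintype.card_subtype_compl]
      congr 1
      exact Fintype.card_coe S
    have e2 : Fintype.card {i : V // w ≤ p.eval (hA.eigenvalues i)} =
        (univ.filter fun i : V => w ≤ p.eval (hA.eigenvalues i)).card :=
      Fintype.card_subtype _
    have e3 : S.card ≤ Fintype.card V := by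
      simpa using Finset.card_le_univ S
    omega
  have hker : LinearMap.ker L ≠ ⊥ := by
    intro h
    exact hLnotinj (LinearMap.ker_eq_bot.mp h)
  obtain ⟨x, hxmem, hx0⟩ := Submodule.exists_mem_ne_zero_of_ne_bot hker
  have hxker : L x = 0 := LinearMap.mem_ker.mp hxmem
  have hxS : ∀ a : V, a ∉ S → x a = 0 := fun a ha =>
    congrFun (congrArg Prod.fst hxker) ⟨a, ha⟩
  have hxP : ∀ i : V, w ≤ p.eval (hA.eigenvalues i) → v i ⬝ᵥ x = 0 := fun i hi =>
    congrFun (congrArg Prod.snd hxker) ⟨i, hi⟩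
  set c : V → ℝ := fun i => v i ⬝ᵥ x with hc
  -- orthonormality
  have horth : ∀ i j, v i ⬝ᵥ v j = if i = j then 1 else 0 := by
    intro i j
    have h := (orthonormal_iff_ite.mp hA.eigenvectorBasis.orthonormal) i j
    simpa [hv, mul_comm, PiLp.inner_apply, RCLike.inner_apply, conj_trivial, dotProduct] using h
  -- expansion of x
  have hexp : x = ∑ i, c i • v i := by
    have h2 : (∑ i, (inner ℝ (hA.eigenvectorBasis i) (WithLp.toLp 2 x) : ℝ) •
        ⇑(hA.eigenvectorBasis i) : V → ℝ) = x := by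
      have := congrArg WithLp.ofLp (hA.eigenvectorBasis.sum_repr' (WithLp.toLp 2 x))
      rw [WithLp.ofLp_sum] at this
      simpa only [WithLp.ofLp_smul] using this
    have h3 : ∀ i : V, (inner ℝ (hA.eigenvectorBasis i) (WithLp.toLp 2 x) : ℝ) =
        v i ⬝ᵥ x := by
      intro i; simp [hv, mul_comm, PiLp.inner_apply, RCLike.inner_apply, conj_trivial, dotProduct]
    conv_lhs => rw [← h2]
    exact Finset.sum_congr rfl fun i _ => by rw [h3]
  -- pairing formula
  have hpair : ∀ a b : V → ℝ, (∑ i, a i • v i) ⬝ᵥ (∑ j, b j • v j) = ∑ i, a i * b i := by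
    intro a b
    simp only [dotProduct, Finset.sum_apply, Pi.smul_apply, smul_eq_mul]
    calc ∑ u, (∑ i, a i * v i u) * (∑ j, b j * v j u)
        = ∑ u, ∑ i, ∑ j, (a i * b j) * (v i u * v j u) := by
          refine Finset.sum_congr rfl fun u _ => ?_
          rw [Finset.sum_mul]
          refine Finset.sum_congr rfl fun i _ => ?_
          rw [Finset.mul_sum]
          exact Finset.sum_congr rfl fun j _ => by ring
      _ = ∑ i, ∑ j, ∑ u, (a i * b j) * (v i u * v j u) := by
          rw [Finset.sum_comm]
          exact Finset.sum_congr rfl fun i _ => Finset.sum_comm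
      _ = ∑ i, ∑ j, (a i * b j) * (v i ⬝ᵥ v j) := by
          refine Finset.sum_congr rfl fun i _ => Finset.sum_congr rfl fun j _ => ?_
          rw [dotProduct, Finset.mul_sum]
      _ = ∑ i, a i * b i := by
          refine Finset.sum_congr rfl fun i _ => ?_
          simp only [horth, mul_ite, mul_one, mul_zero]
          rw [Finset.sum_ite_eq]
          simp
  -- action of B on x
  have hBx : B *ᵥ x = ∑ i, (c i * p.eval (hA.eigenvalues i)) • v i := by
    conv_lhs => rw [hexp]
    have h1 : B *ᵥ (∑ i, c i • v i) = ∑ i, c i • (B *ᵥ v i) := by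
      rw [← Matrix.mulVecLin_apply, map_sum]
      exact Finset.sum_congr rfl fun i _ => by rw [_root_.map_smul, Matrix.mulVecLin_apply]
    rw [h1]
    refine Finset.sum_congr rfl fun i _ => ?_
    rw [hB, hv, aeval_mulVec_eigen hA p i, smul_smul]
  -- quadratic form identities
  have hQ : x ⬝ᵥ (B *ᵥ x) = ∑ i, c i * (c i * p.eval (hA.eigenvalues i)) := by
    conv_lhs => rw [hBx, hexp]
    exact hpair c fun i => c i * p.eval (hA.eigenvalues i)
  have hT : x ⬝ᵥ x = ∑ i, c i * c i := by
    conv_lhs => rw [hexp]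
    exact hpair c c
  -- lower bound via diagonal
  have hlow : w * (x ⬝ᵥ x) ≤ x ⬝ᵥ (B *ᵥ x) := by
    have hdot : x ⬝ᵥ (B *ᵥ x) = ∑ u, B u u * x u ^ 2 := by
      rw [dotProduct]
      refine Finset.sum_congr rfl fun u _ => ?_
      by_cases hu : u ∈ S
      · rw [Matrix.mulVec, dotProduct]
        rw [Finset.sum_eq_single u]
        · ring
        · intro a _ hau
          by_cases haS : a ∈ S
          · rw [hoff u hu a haS (Ne.symm hau), zero_mul]
          · rw [hxS a haS, mul_zero]
        · intro h; exact absurd (Finset.mem_univ u) h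
      · rw [hxS u hu]; ring
    rw [hdot, dotProduct, Finset.mul_sum]
    refine Finset.sum_le_sum fun u _ => ?_
    have : x u * x u = x u ^ 2 := by ring
    rw [this]
    exact mul_le_mul_of_nonneg_right (hwle u) (sq_nonneg _)
  -- strict upper bound via eigenvalues
  have hup : x ⬝ᵥ (B *ᵥ x) < w * (x ⬝ᵥ x) := by
    rw [hQ, hT, Finset.mul_sum]
    have hcne : ∃ i, c i ≠ 0 := by
      by_contra hall
      push_neg at hall
      apply hx0
      rw [hexp]
      simp [hall]
    obtain ⟨i0, hi0⟩ := hcne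
    refine Finset.sum_lt_sum (fun i _ => ?_) ⟨i0, Finset.mem_univ i0, ?_⟩
    · by_cases hi : w ≤ p.eval (hA.eigenvalues i)
      · have : c i = 0 := hxP i hi
        simp [this]
      · push_neg at hi
        nlinarith [mul_self_nonneg (c i)]
    · have hi' : ¬ w ≤ p.eval (hA.eigenvalues i0) := fun h => hi0 (hxP i0 h)
      push_neg at hi'
      have hpos : 0 < c i0 * c i0 := mul_self_pos.mpr hi0
      nlinarith
  linarith


/-- The `k`-independence number: maximum size of a set of vertices at pairwise
distance greater than `k`. -/
noncomputable def kIndepNum {V : Type*} [Fintype V] (G : SimpleGraph V) (k : ℕ) : ℕ :=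
  sSup {n : ℕ | ∃ S : Finset V,
    (∀ u ∈ S, ∀ v ∈ S, u ≠ v → (k : ℕ∞) < G.edist u v) ∧ S.card = n}

/-- the Abiad et al. spectral bound for the `k`-independence
number: `α_k(G) ≤ min{|{i : p(λᵢ) ≥ w(p)}|, |{i : p(λᵢ) ≤ W(p)}|}` where
`w(p)` and `W(p)` are the min and max diagonal entries of `p(A)`. -/
theorem kIndepNum_spectral_bound {V : Type*} [Fintype V] [DecidableEq V]
    (G : SimpleGraph V) [DecidableRel G.Adj]
    (hA : (G.adjMatrix ℝ).IsHermitian)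
    (k : ℕ) (hk : 1 ≤ k) (p : Polynomial ℝ) (hdeg : p.natDegree ≤ k)
    (w W : ℝ)
    (hw : IsLeast (Set.range fun u : V => (aeval (G.adjMatrix ℝ) p) u u) w)
    (hW : IsGreatest (Set.range fun u : V => (aeval (G.adjMatrix ℝ) p) u u) W) :
    kIndepNum G k ≤
      min (univ.filter fun i : V => w ≤ p.eval (hA.eigenvalues i)).card
          (univ.filter fun i : V => p.eval (hA.eigenvalues i) ≤ W).card := by
  have hw' : IsLeast (Set.range fun u : V => (aeval (G.adjMatrix ℝ) (-p)) u u) (-W) := by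
    constructor
    · obtain ⟨u, hu⟩ := hW.1
      exact ⟨u, by simp [map_neg, Matrix.neg_apply, hu]⟩
    · rintro y ⟨u, rfl⟩
      have h := hW.2 (Set.mem_range_self u)
      simp only [map_neg, Matrix.neg_apply]
      linarith
  have hdeg' : (-p).natDegree ≤ k := by rwa [natDegree_neg]
  have hfilter : (univ.filter fun i : V => -W ≤ (-p).eval (hA.eigenvalues i)) =
      (univ.filter fun i : V => p.eval (hA.eigenvalues i) ≤ W) := by
    refine Finset.filter_congr fun i _ => ?_
    rw [eval_neg]
    exact neg_le_neg_iff
  refine csSup_le ⟨0, ∅, by simp⟩ ?_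
  rintro n ⟨S, hS, rfl⟩
  refine le_min (key_bound G hA k p hdeg w hw S hS) ?_
  have h2 := key_bound G hA k (-p) hdeg' (-W) hw' S hS
  rwa [hfilter] at h2
end

section
/- Let G be a graph on n vertices with adjacency matrix eigenvalues λ₁ ≥ … ≥ λₙ, and let p be a real polynomial of degree at most k with w(p) = min_u (p(A))_{uu}. If {P^{(u)}}_{u∈V} is a d-dimensional k-projective packing of G, then (1/d) Σ_u rank(P^{(u)}) ≤ |{i : p(λᵢ) ≥ w(p)}|. -/
open Matrix Finset Polynomial

section Aux

lemma aux_trace_normSq {m n : Type*} [Fintype m] [Fintype n] (X : Matrix m n ℂ) :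
    Matrix.trace (Xᴴ * X) = ((∑ j : n, ∑ i : m, Complex.normSq (X i j) : ℝ) : ℂ) := by
  simp only [Matrix.trace, Matrix.diag, Matrix.mul_apply, Matrix.conjTranspose_apply]
  push_cast
  refine Finset.sum_congr rfl fun j _ => Finset.sum_congr rfl fun i _ => ?_
  rw [Complex.normSq_eq_conj_mul_self]
  rfl

lemma aux_proj_mul_eq_zero {d : ℕ} {Pu Pv : Matrix (Fin d) (Fin d) ℂ}
    (hu : Pu.IsHermitian) (hu2 : Pu * Pu = Pu)
    (hv : Pv.IsHermitian) (hv2 : Pv * Pv = Pv)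
    (h : Matrix.trace (Pu * Pv) = 0) : Pu * Pv = 0 := by
  have key : ((Pu * Pv)ᴴ * (Pu * Pv)).trace = 0 := by
    have : (Pu * Pv)ᴴ * (Pu * Pv) = Pv * (Pu * Pv) := by
      rw [conjTranspose_mul, hu.eq, hv.eq, Matrix.mul_assoc, ← Matrix.mul_assoc Pu Pu Pv,
        hu2]
    rw [this, trace_mul_comm, Matrix.mul_assoc, hv2, h]
  rw [aux_trace_normSq] at key
  have hsum : (∑ j, ∑ i, Complex.normSq ((Pu * Pv) i j)) = 0 := by exact_mod_cast key
  have : ∀ j ∈ (univ : Finset (Fin d)), (∑ i, Complex.normSq ((Pu * Pv) i j)) = 0 := by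
    rw [← Finset.sum_eq_zero_iff_of_nonneg]
    · exact hsum
    · intro j _; exact Finset.sum_nonneg fun i _ => Complex.normSq_nonneg _
  ext i j
  have h2 := (Finset.sum_eq_zero_iff_of_nonneg (fun i _ => Complex.normSq_nonneg ((Pu * Pv) i j))).mp
    (this j (mem_univ j)) i (mem_univ i)
  simpa using Complex.normSq_eq_zero.mp h2

lemma aux_aeval_mulVec {n : Type*} [Fintype n] [DecidableEq n]
    (A : Matrix n n ℝ) (v : n → ℝ) (μ : ℝ) (hv : A *ᵥ v = μ • v) (p : ℝ[X]) :
    (aeval A p) *ᵥ v = p.eval μ • v := by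
  have hpow : ∀ l : ℕ, (A ^ l) *ᵥ v = μ ^ l • v := by
    intro l
    induction l with
    | zero => simp
    | succ l ih =>
      rw [pow_succ, ← Matrix.mulVec_mulVec, hv, Matrix.mulVec_smul, ih, smul_smul, pow_succ,
        mul_comm]
  induction p using Polynomial.induction_on' with
  | add f g hf hg => rw [map_add, Matrix.add_mulVec, hf, hg, eval_add, add_smul]
  | monomial l a =>
    rw [aeval_monomial, eval_monomial, Algebra.algebraMap_eq_smul_one, smul_mul_assoc,
      one_mul, Matrix.smul_mulVec, hpow, smul_smul]

lemma aux_isHermitian_aeval {n : Type*} [Fintype n] [DecidableEq n]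
    {A : Matrix n n ℝ} (hA : A.IsHermitian) (p : ℝ[X]) :
    (aeval A p).IsHermitian := by
  rw [Matrix.IsHermitian, aeval_eq_sum_range, conjTranspose_sum]
  refine Finset.sum_congr rfl fun i _ => ?_
  rw [Matrix.conjTranspose_smul, star_trivial, (hA.pow i).eq]


lemma aux_trace_expand {m n : Type*} [Fintype m] [Fintype n] (X M : Matrix m n ℂ) :
    Matrix.trace (Xᴴ * M) = ∑ u : m, ∑ j : n, (starRingEnd ℂ) (X u j) * M u j := by
  rw [Matrix.trace, Finset.sum_comm]
  simp [Matrix.diag, Matrix.mul_apply, Matrix.conjTranspose_apply, Complex.star_def]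

end Aux

/-- the spectral bound for the value of a `d`-dimensional
`k`-projective packing: `(1/d) Σ_u rank(P⁽ᵘ⁾) ≤ |{i : p(λᵢ) ≥ w(p)}|`. -/
theorem kProjectivePacking_spectral_bound {V : Type*} [Fintype V] [DecidableEq V]
    (G : SimpleGraph V) [DecidableRel G.Adj]
    (hA : (G.adjMatrix ℝ).IsHermitian)
    (k : ℕ) (hk : 1 ≤ k) (p : Polynomial ℝ) (hdeg : p.natDegree ≤ k)
    (w : ℝ)
    (hw : IsLeast (Set.range fun u : V => (aeval (G.adjMatrix ℝ) p) u u) w)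
    (d : ℕ) (hd : 0 < d) (P : V → Matrix (Fin d) (Fin d) ℂ)
    (hproj : ∀ u, (P u).IsHermitian ∧ P u * P u = P u)
    (horth : ∀ u v, u ≠ v → G.edist u v ≤ (k : ℕ∞) →
      Matrix.trace (P u * P v) = 0) :
    ((∑ u : V, (P u).rank : ℕ) : ℝ) / (d : ℝ) ≤
      ((univ.filter fun i : V => w ≤ p.eval (hA.eigenvalues i)).card : ℝ) := by
  classical
  set A := G.adjMatrix ℝ with hAdef
  set B := aeval A p with hBdef
  have hBH : B.IsHermitian := aux_isHermitian_aeval hA p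
  set lam := hA.eigenvalues with hlam
  set f : V → V → ℝ := fun i u => hA.eigenvectorBasis i u with hf
  -- eigenvector facts
  have hfe : ∀ i, B *ᵥ f i = p.eval (lam i) • f i := by
    intro i
    refine aux_aeval_mulVec A (f i) (lam i) ?_ p
    have := hA.mulVec_eigenvectorBasis i
    funext u
    exact congr_fun this u
  have hortho : ∀ i j, (∑ u, f i u * f j u) = if i = j then 1 else 0 := by
    intro i j
    have h := (orthonormal_iff_ite (𝕜 := ℝ)).mp hA.eigenvectorBasis.orthonormal i j
    rw [PiLp.inner_apply] at h
    simp [RCLike.inner_apply] at h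
    rw [← h]
    exact Finset.sum_congr rfl fun u _ => mul_comm _ _
  -- complexifications
  set Fc : Matrix V V ℂ := Matrix.of fun i u => ((f i u : ℝ) : ℂ) with hFc
  set Bc : Matrix V V ℂ := Matrix.of fun u v => ((B u v : ℝ) : ℂ) with hBc
  set Dc : Matrix V V ℂ := Matrix.diagonal fun i => ((p.eval (lam i) : ℝ) : ℂ) with hDc
  have hFFH : Fc * Fcᴴ = 1 := by
    ext i j
    simp only [Matrix.mul_apply, Matrix.conjTranspose_apply, hFc, Matrix.of_apply,
      Matrix.one_apply, RCLike.star_def, Complex.conj_ofReal]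
    rw [show (∑ u, (f i u : ℂ) * (f j u : ℂ)) = ((∑ u, f i u * f j u : ℝ) : ℂ) by push_cast; rfl,
      hortho i j]
    split <;> simp
  have hFHF : Fcᴴ * Fc = 1 := mul_eq_one_comm.mp hFFH
  have hBsymm : ∀ u v, B v u = B u v := by
    intro u v
    have := hBH.apply u v
    simpa using this
  have hFB : Fc * Bc = Dc * Fc := by
    ext i v
    rw [Matrix.mul_apply, hDc, Matrix.diagonal_mul]
    have hrow : (∑ u, f i u * B u v) = p.eval (lam i) * f i v := by
      have := congr_fun (hfe i) v
      rw [Matrix.mulVec, dotProduct] at this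
      simpa [mul_comm, hBsymm] using this
    calc (∑ u, Fc i u * Bc u v) = ((∑ u, f i u * B u v : ℝ) : ℂ) := by
          push_cast [hFc, hBc]; rfl
      _ = ((p.eval (lam i) * f i v : ℝ) : ℂ) := by rw [hrow]
      _ = _ := by push_cast [hFc]; rfl
  have hBcH : Bc * Fcᴴ = Fcᴴ * Dc := by
    have h1 := congrArg Matrix.conjTranspose hFB
    rw [Matrix.conjTranspose_mul, Matrix.conjTranspose_mul] at h1
    have hBcherm : Bcᴴ = Bc := by
      ext u v
      simp [hBc, Matrix.conjTranspose_apply, Complex.conj_ofReal, hBsymm u v]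
    have hDcherm : Dcᴴ = Dc := by
      ext u v
      rcases eq_or_ne u v with rfl | h
      · simp [hDc, Matrix.conjTranspose_apply, Complex.conj_ofReal]
      · simp [hDc, Matrix.conjTranspose_apply, Matrix.diagonal_apply_ne _ h,
          Matrix.diagonal_apply_ne' _ h]
    rwa [hBcherm, hDcherm] at h1
  -- orthogonality of projectors at close distance
  have hPzero : ∀ u v, u ≠ v → B u v ≠ 0 → P u * P v = 0 := by
    intro u v hne hB0
    have hdist : G.edist u v ≤ (k : ℕ∞) := by
      rw [hBdef, aeval_eq_sum_range' (lt_of_le_of_lt hdeg (Nat.lt_succ_self k))] at hB0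
      have hB0' : (∑ l ∈ range (k+1), p.coeff l * (A ^ l) u v) ≠ 0 := by
        intro hcon
        apply hB0
        calc (∑ l ∈ range (k+1), p.coeff l • A ^ l) u v
            = ∑ l ∈ range (k+1), p.coeff l * (A ^ l) u v := by
              simp [Matrix.sum_apply, Matrix.smul_apply, smul_eq_mul]
          _ = 0 := hcon
      obtain ⟨l, hl, hlv⟩ := Finset.exists_ne_zero_of_sum_ne_zero hB0'
      have hAl : (A ^ l) u v ≠ 0 := fun hcon => hlv (by rw [hcon, mul_zero])
      rw [hAdef, SimpleGraph.adjMatrix_pow_apply_eq_card_walk] at hAl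
      have hcard : Fintype.card {q : G.Walk u v | q.length = l} ≠ 0 := by
        intro hcon; apply hAl; rw [hcon]; simp
      have : Nonempty {q : G.Walk u v | q.length = l} := by
        rwa [← Fintype.card_pos_iff, Nat.pos_iff_ne_zero]
      obtain ⟨q, hq⟩ := this
      have hq' : q.length = l := hq
      calc G.edist u v ≤ (q.length : ℕ∞) := SimpleGraph.edist_le q
        _ = (l : ℕ∞) := by rw [hq']
        _ ≤ (k : ℕ∞) := by
            exact_mod_cast Nat.cast_le.mpr (Nat.lt_succ_iff.mp (Finset.mem_range.mp hl))
    exact aux_proj_mul_eq_zero (hproj u).1 (hproj u).2 (hproj v).1 (hproj v).2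
      (horth u v hne hdist)
  have hwB : ∀ u, w ≤ B u u := fun u => hw.2 ⟨u, rfl⟩
  set S : Finset V := univ.filter fun i : V => w ≤ p.eval (lam i) with hS
  rw [div_le_iff₀ (by exact_mod_cast hd : (0:ℝ) < (d:ℝ))]
  suffices hcard : (∑ u : V, (P u).rank) ≤ S.card * d by exact_mod_cast hcard
  -- the injective linear map
  let Ψ : (Π u : V, ↥(LinearMap.range (P u).mulVecLin)) →ₗ[ℂ] ((i : ↥S) → Fin d → ℂ) :=
    { toFun := fun y i j => ∑ u, Fc i.1 u * (y u : Fin d → ℂ) j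
      map_add' := by
        intro y z
        funext i j
        simp [mul_add, Finset.sum_add_distrib]
      map_smul' := by
        intro c y
        funext i j
        simp [Finset.mul_sum, mul_left_comm] }
  have hinj : Function.Injective Ψ := by
    rw [← LinearMap.ker_eq_bot, LinearMap.ker_eq_bot']
    intro y hy
    have hy' : ∀ i : ↥S, ∀ j, (∑ u, Fc i.1 u * (y u : Fin d → ℂ) j) = 0 :=
      fun i j => congr_fun (congr_fun hy i) j
    set X : Matrix V (Fin d) ℂ := Matrix.of fun u j => (y u : Fin d → ℂ) j with hX
    have hXfix : ∀ u, P u *ᵥ (X u) = X u := by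
      intro u
      obtain ⟨z, hz⟩ := (y u).2
      rw [Matrix.mulVecLin_apply] at hz
      have hXu : X u = P u *ᵥ z := by
        funext j; exact (congr_fun hz j).symm
      rw [hXu, Matrix.mulVec_mulVec, (hproj u).2]
    set C : Matrix V (Fin d) ℂ := Fc * X with hC
    have hCgood : ∀ i ∈ S, ∀ j, C i j = 0 := by
      intro i hi j
      rw [hC, Matrix.mul_apply]
      exact hy' ⟨i, hi⟩ j
    have hXC : X = Fcᴴ * C := by
      rw [hC, ← Matrix.mul_assoc, hFHF, Matrix.one_mul]
    set t : V → ℝ := fun i => ∑ j, Complex.normSq (C i j) with ht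
    set r : V → ℝ := fun u => ∑ j, Complex.normSq (X u j) with hr
    have htnn : ∀ i, 0 ≤ t i := fun i =>
      Finset.sum_nonneg fun j _ => Complex.normSq_nonneg _
    have hrnn : ∀ u, 0 ≤ r u := fun u =>
      Finset.sum_nonneg fun j _ => Complex.normSq_nonneg _
    have hparseval : ∑ i, t i = ∑ u, r u := by
      have hmat : Cᴴ * C = Xᴴ * X := by
        rw [hC, Matrix.conjTranspose_mul, Matrix.mul_assoc, ← Matrix.mul_assoc Fcᴴ,
          hFHF, Matrix.one_mul]
      have htr := congrArg Matrix.trace hmat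
      rw [aux_trace_normSq, aux_trace_normSq] at htr
      have hre : (∑ j, ∑ i, Complex.normSq (C i j)) = ∑ j, ∑ i, Complex.normSq (X i j) := by
        exact_mod_cast htr
      calc ∑ i, t i = ∑ j, ∑ i, Complex.normSq (C i j) := Finset.sum_comm
        _ = ∑ j, ∑ i, Complex.normSq (X i j) := hre
        _ = ∑ u, r u := Finset.sum_comm
    have hT1 : Matrix.trace (Xᴴ * (Bc * X)) = ((∑ i, p.eval (lam i) * t i : ℝ) : ℂ) := by
      have hBX : Bc * X = Fcᴴ * (Dc * C) := by
        rw [hXC, ← Matrix.mul_assoc, hBcH, Matrix.mul_assoc]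
      have hXH : Xᴴ = Cᴴ * Fc := by
        rw [hXC, Matrix.conjTranspose_mul, Matrix.conjTranspose_conjTranspose]
      have hmat : Xᴴ * (Bc * X) = Cᴴ * (Dc * C) := by
        rw [hBX, hXH, Matrix.mul_assoc, ← Matrix.mul_assoc Fc, hFFH, Matrix.one_mul]
      rw [hmat, aux_trace_expand]
      have hterm : ∀ i j, (starRingEnd ℂ) (C i j) * (Dc * C) i j
          = ((p.eval (lam i) * Complex.normSq (C i j) : ℝ) : ℂ) := by
        intro i j
        rw [hDc, Matrix.diagonal_mul]
        push_cast
        rw [Complex.normSq_eq_conj_mul_self]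
        ring
      calc (∑ i, ∑ j, (starRingEnd ℂ) (C i j) * (Dc * C) i j)
          = ∑ i, ∑ j, ((p.eval (lam i) * Complex.normSq (C i j) : ℝ) : ℂ) := by
            exact Finset.sum_congr rfl fun i _ => Finset.sum_congr rfl fun j _ => hterm i j
        _ = ((∑ i, p.eval (lam i) * t i : ℝ) : ℂ) := by
            push_cast [ht, Finset.mul_sum]
            rfl
    have hT2 : Matrix.trace (Xᴴ * (Bc * X)) = ((∑ u, B u u * r u : ℝ) : ℂ) := by
      rw [aux_trace_expand]
      have hstep : ∀ u, (∑ j, (starRingEnd ℂ) (X u j) * (Bc * X) u j)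
          = ∑ v, Bc u v * (star (X u) ⬝ᵥ X v) := by
        intro u
        simp only [Matrix.mul_apply, Finset.mul_sum, dotProduct,
          Pi.star_apply, Complex.star_def]
        rw [Finset.sum_comm]
        exact Finset.sum_congr rfl fun v _ => Finset.sum_congr rfl fun j _ => by ring
      have hoff : ∀ u v, u ≠ v → Bc u v * (star (X u) ⬝ᵥ X v) = 0 := by
        intro u v hne
        by_cases hBzero : B u v = 0
        · rw [hBc]
          simp [Matrix.of_apply, hBzero]
        · have hPP : P u * P v = 0 := hPzero u v hne hBzero
          have : star (X u) ⬝ᵥ X v = 0 := by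
            conv_lhs => rw [← hXfix u, ← hXfix v]
            rw [Matrix.star_mulVec, Matrix.dotProduct_mulVec, Matrix.vecMul_vecMul,
              (hproj u).1.eq, hPP, Matrix.vecMul_zero, zero_dotProduct]
          rw [this, mul_zero]
      have hdiag : ∀ u, star (X u) ⬝ᵥ X u = ((r u : ℝ) : ℂ) := by
        intro u
        rw [hr]
        push_cast
        refine Finset.sum_congr rfl fun j _ => ?_
        rw [Pi.star_apply, Complex.star_def, Complex.normSq_eq_conj_mul_self]
      calc (∑ u, ∑ j, (starRingEnd ℂ) (X u j) * (Bc * X) u j)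
          = ∑ u, ∑ v, Bc u v * (star (X u) ⬝ᵥ X v) :=
            Finset.sum_congr rfl fun u _ => hstep u
        _ = ∑ u, Bc u u * (star (X u) ⬝ᵥ X u) := by
            refine Finset.sum_congr rfl fun u _ => ?_
            exact Finset.sum_eq_single u (fun v _ hvu => hoff u v (Ne.symm hvu))
              (fun hne => absurd (Finset.mem_univ u) hne)
        _ = ((∑ u, B u u * r u : ℝ) : ℂ) := by
            push_cast
            refine Finset.sum_congr rfl fun u _ => ?_
            rw [hdiag u, hBc]
            push_cast [Matrix.of_apply]
            ring
    have hmain : ∑ i, p.eval (lam i) * t i = ∑ u, B u u * r u := by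
      have := hT1.symm.trans hT2
      exact_mod_cast this
    have htS : ∀ i ∈ S, t i = 0 := by
      intro i hi
      rw [ht]
      exact Finset.sum_eq_zero fun j _ => by rw [hCgood i hi j]; simp
    have hnotS : ∀ i, i ∉ S → p.eval (lam i) < w := by
      intro i hi
      by_contra hcon
      exact hi (Finset.mem_filter.mpr ⟨Finset.mem_univ i, le_of_not_gt hcon⟩)
    have hkey : (0:ℝ) ≤ ∑ i, (p.eval (lam i) - w) * t i := by
      have e1 : ∑ i, (p.eval (lam i) - w) * t i
          = (∑ u, B u u * r u) - w * (∑ u, r u) := by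
        rw [← hmain, ← hparseval, Finset.mul_sum, ← Finset.sum_sub_distrib]
        exact Finset.sum_congr rfl fun i _ => by ring
      rw [e1, sub_nonneg, Finset.mul_sum]
      exact Finset.sum_le_sum fun u _ =>
        mul_le_mul_of_nonneg_right (hwB u) (hrnn u)
    have hterm : ∀ i ∈ (univ : Finset V), (p.eval (lam i) - w) * t i ≤ 0 := by
      intro i _
      by_cases hi : i ∈ S
      · rw [htS i hi, mul_zero]
      · exact mul_nonpos_of_nonpos_of_nonneg (by linarith [hnotS i hi]) (htnn i)
    have hsum0 : ∑ i, (p.eval (lam i) - w) * t i = 0 :=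
      le_antisymm (Finset.sum_nonpos hterm) hkey
    have hall0 : ∀ i ∈ (univ : Finset V), (p.eval (lam i) - w) * t i = 0 :=
      (Finset.sum_eq_zero_iff_of_nonpos hterm).mp hsum0
    have ht0 : ∀ i, t i = 0 := by
      intro i
      by_cases hi : i ∈ S
      · exact htS i hi
      · have h0 := hall0 i (Finset.mem_univ i)
        rcases mul_eq_zero.mp h0 with h | h
        · exact absurd h (by intro hcon; linarith [hnotS i hi, sub_eq_zero.mp hcon])
        · exact h
    have hC0 : C = 0 := by
      ext i j
      have := (Finset.sum_eq_zero_iff_of_nonneg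
        (fun j _ => Complex.normSq_nonneg (C i j))).mp (ht0 i) j (Finset.mem_univ j)
      simpa using Complex.normSq_eq_zero.mp this
    have hX0 : X = 0 := by rw [hXC, hC0, Matrix.mul_zero]
    funext u
    refine Subtype.ext ?_
    have : (y u : Fin d → ℂ) = 0 := by
      funext j
      exact congr_fun (congr_fun hX0 u) j
    simpa using this
  calc (∑ u : V, (P u).rank)
      = Module.finrank ℂ (Π u : V, ↥(LinearMap.range (P u).mulVecLin)) := by
        rw [Module.finrank_pi_fintype]; rfl
    _ ≤ Module.finrank ℂ ((i : ↥S) → Fin d → ℂ) :=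
        LinearMap.finrank_le_finrank_of_injective hinj
    _ = S.card * d := by
        rw [Module.finrank_pi_fintype]
        simp [Module.finrank_pi, Fintype.card_coe]
end

section
/- For any d-dimensional 1-projective packing {P^{(u)}} of a graph G, (1/d) Σ_u rank(P^{(u)}) ≤ n⁰(A) + min{n⁺(A), n⁻(A)}, where A is the adjacency matrix of G. -/
open Matrix Finset

lemma trace_conjTranspose_mul_self_eq_zero' {m n : Type*} [Fintype m] [Fintype n]
    (A : Matrix m n ℂ) (h : Matrix.trace (Aᴴ * A) = 0) : A = 0 := by
  have h2 : ∑ j : n, ∑ i : m, (Complex.normSq (A i j) : ℂ) = 0 := by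
    rw [← h]
    simp only [Matrix.trace, Matrix.diag, Matrix.mul_apply, Matrix.conjTranspose_apply]
    refine Finset.sum_congr rfl fun j _ => Finset.sum_congr rfl fun i _ => ?_
    rw [Complex.normSq_eq_conj_mul_self]; rfl
  have h3 : ∑ j : n, ∑ i : m, Complex.normSq (A i j) = 0 := by exact_mod_cast h2
  ext i j
  have h4 := Finset.sum_eq_zero_iff_of_nonneg (fun j _ => Finset.sum_nonneg fun i _ =>
    Complex.normSq_nonneg _) |>.mp h3 j (Finset.mem_univ j)
  have h5 := Finset.sum_eq_zero_iff_of_nonneg (fun i _ => Complex.normSq_nonneg _) |>.mp h4 i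
    (Finset.mem_univ i)
  simpa using Complex.normSq_eq_zero.mp h5

lemma proj_mul_eq_zero {d : ℕ} {p q : Matrix (Fin d) (Fin d) ℂ}
    (hp : p.IsHermitian) (hp2 : p * p = p) (hq : q.IsHermitian) (hq2 : q * q = q)
    (ht : Matrix.trace (p * q) = 0) : p * q = 0 := by
  have key : (q * p)ᴴ * (q * p) = p * q * p := by
    rw [conjTranspose_mul, hp.eq, hq.eq]
    calc p * q * (q * p) = p * (q * q) * p := by noncomm_ring
    _ = p * q * p := by rw [hq2]
  have htr : Matrix.trace ((q * p)ᴴ * (q * p)) = 0 := by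
    rw [key, Matrix.trace_mul_cycle, hp2, ht]
  have hz : q * p = 0 := trace_conjTranspose_mul_self_eq_zero' _ htr
  calc p * q = (q * p)ᴴ := by rw [conjTranspose_mul, hp.eq, hq.eq]
  _ = 0 := by rw [hz, conjTranspose_zero]

lemma map_ofReal_conjTranspose {V : Type*} [Fintype V] (M : Matrix V V ℝ) :
    (M.map Complex.ofReal)ᴴ = (star M).map Complex.ofReal := by
  ext i j
  simp [Matrix.conjTranspose_apply, Matrix.map_apply, Matrix.star_apply, Complex.conj_ofReal]

lemma sum_quad {V W : Type*} [Fintype V] [Fintype W] (B : Matrix V V ℂ)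
    (X : Matrix V W ℂ) :
    ∑ u : V, ∑ v : V, B u v * (star (X u) ⬝ᵥ X v) = Matrix.trace (Xᴴ * B * X) := by
  simp only [Matrix.trace, Matrix.diag_apply, Matrix.mul_apply, Matrix.conjTranspose_apply,
    dotProduct, Pi.star_apply, Finset.sum_mul, Finset.mul_sum]
  calc ∑ u : V, ∑ v : V, ∑ j : W, B u v * (star (X u j) * X v j)
      = ∑ v : V, ∑ u : V, ∑ j : W, B u v * (star (X u j) * X v j) := Finset.sum_comm
    _ = ∑ v : V, ∑ j : W, ∑ u : V, B u v * (star (X u j) * X v j) :=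
        Finset.sum_congr rfl fun v _ => Finset.sum_comm
    _ = ∑ j : W, ∑ v : V, ∑ u : V, B u v * (star (X u j) * X v j) := Finset.sum_comm
    _ = ∑ j : W, ∑ v : V, ∑ u : V, star (X u j) * B u v * X v j :=
        Finset.sum_congr rfl fun j _ => Finset.sum_congr rfl fun v _ =>
          Finset.sum_congr rfl fun u _ => by ring

set_option maxHeartbeats 1000000 in
set_option synthInstance.maxHeartbeats 400000 in
lemma dim_bound {V : Type*} [Fintype V] [DecidableEq V] (d : ℕ)
    (S : V → Submodule ℂ (Fin d → ℂ))
    (U : Matrix V V ℂ) (μ : V → ℝ) (hU2 : U * Uᴴ = 1)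
    (B : Matrix V V ℂ)
    (hB : B = U * Matrix.diagonal (fun i => (μ i : ℂ)) * Uᴴ)
    (ε : ℝ) (hε : ε = 1 ∨ ε = -1)
    (hiso : ∀ (g : ∀ u : V, S u) (u v : V), B u v ≠ 0 →
      star ((g u : Fin d → ℂ)) ⬝ᵥ ((g v : Fin d → ℂ)) = 0) :
    ∑ u : V, Module.finrank ℂ (S u) ≤
      d * ((univ.filter fun i : V => μ i = 0).card
        + (univ.filter fun i : V => 0 < ε * μ i).card) := by
  classical
  set D : Matrix V V ℂ := Matrix.diagonal (fun i => (μ i : ℂ)) with hD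
  let F : (∀ u : V, S u) →ₗ[ℂ] Matrix V (Fin d) ℂ :=
    { toFun := fun g => Matrix.of fun u => (g u : Fin d → ℂ)
      map_add' := fun g h => rfl
      map_smul' := fun a g => rfl }
  let c : (∀ u : V, S u) →ₗ[ℂ] Matrix V (Fin d) ℂ :=
    { toFun := fun g => Uᴴ * F g
      map_add' := fun g h => by simp [Matrix.mul_add]
      map_smul' := fun a g => by simp [Matrix.mul_smul] }
  have hcF : ∀ g, c g = Uᴴ * F g := fun g => rfl
  -- the isotropy identity transported to the eigencoordinates
  have hzero : ∀ g : ∀ u : V, S u, ∑ i : V, (μ i : ℂ) * (star (c g i) ⬝ᵥ c g i) = 0 := by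
    intro g
    have h0 : ∑ u : V, ∑ v : V, B u v * (star (F g u) ⬝ᵥ F g v) = 0 :=
      Finset.sum_eq_zero fun u _ => Finset.sum_eq_zero fun v _ => by
        by_cases h : B u v = 0
        · rw [h, zero_mul]
        · rw [show star (F g u) ⬝ᵥ F g v = 0 from hiso g u v h, mul_zero]
    have h1 : (F g)ᴴ * B * F g = (c g)ᴴ * D * c g := by
      have hcH : (c g)ᴴ = (F g)ᴴ * U := by
        rw [hcF, conjTranspose_mul, conjTranspose_conjTranspose]
      rw [hcH, hcF, hB]
      simp only [Matrix.mul_assoc]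
    have h2 : ∑ u : V, ∑ v : V, D u v * (star (c g u) ⬝ᵥ c g v)
        = ∑ i : V, (μ i : ℂ) * (star (c g i) ⬝ᵥ c g i) := by
      refine Finset.sum_congr rfl fun u _ => ?_
      rw [Finset.sum_eq_single u]
      · rw [hD, Matrix.diagonal_apply_eq]
      · intro v _ hv
        rw [hD, Matrix.diagonal_apply_ne' _ hv, zero_mul]
      · intro h; exact absurd (Finset.mem_univ u) h
    calc ∑ i : V, (μ i : ℂ) * (star (c g i) ⬝ᵥ c g i)
        = Matrix.trace ((c g)ᴴ * D * c g) := by rw [← h2, sum_quad]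
      _ = Matrix.trace ((F g)ᴴ * B * F g) := by rw [h1]
      _ = 0 := by rw [← sum_quad, h0]
  -- real version
  have hrzero : ∀ g : ∀ u : V, S u,
      ∑ i : V, μ i * (∑ j, Complex.normSq (c g i j)) = 0 := by
    intro g
    have h := hzero g
    have hcr : ∀ i : V, star (c g i) ⬝ᵥ c g i
        = ((∑ j, Complex.normSq (c g i j) : ℝ) : ℂ) := by
      intro i
      push_cast
      refine Finset.sum_congr rfl fun j _ => ?_
      rw [Complex.normSq_eq_conj_mul_self]; rfl
    simp_rw [hcr] at h
    exact_mod_cast h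
  have hc_of_r : ∀ (g : ∀ u : V, S u) (i : V),
      (∑ j, Complex.normSq (c g i j)) = 0 → c g i = 0 := by
    intro g i h
    funext j
    have := (Finset.sum_eq_zero_iff_of_nonneg
      (fun j _ => Complex.normSq_nonneg (c g i j))).mp h j (Finset.mem_univ j)
    exact Complex.normSq_eq_zero.mp this
  -- kernel elements are supported on the zero eigenspace
  have hker : ∀ g : ∀ u : V, S u, (∀ i, 0 < ε * μ i → c g i = 0) →
      ∀ i, μ i ≠ 0 → c g i = 0 := by
    intro g hpos i hi
    have hterm : ∀ k : V, k ∈ univ → ε * μ k * (∑ j, Complex.normSq (c g k j)) ≤ 0 := by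
      intro k _
      by_cases h1 : 0 < ε * μ k
      · have hz : (∑ j, Complex.normSq (c g k j)) = 0 := by
          rw [hpos k h1]; simp
        rw [hz, mul_zero]
      · exact mul_nonpos_of_nonpos_of_nonneg (le_of_not_gt h1)
          (Finset.sum_nonneg fun j _ => Complex.normSq_nonneg _)
    have hsum0 : ∑ k : V, ε * μ k * (∑ j, Complex.normSq (c g k j)) = 0 := by
      simp_rw [mul_assoc, ← Finset.mul_sum]
      rw [hrzero g, mul_zero]
    have heach := (Finset.sum_eq_zero_iff_of_nonpos hterm).mp hsum0 i (Finset.mem_univ i)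
    have hεμ : ε * μ i ≠ 0 := by
      rcases hε with h | h <;> simp [h, hi]
    exact hc_of_r g i (by
      rcases mul_eq_zero.mp heach with h | h
      · exact absurd h hεμ
      · exact h)
  -- dimension counting
  let Φ : (∀ u : V, S u) →ₗ[ℂ] ({i : V // 0 < ε * μ i} → (Fin d → ℂ)) :=
    (LinearMap.pi fun i : {i : V // 0 < ε * μ i} =>
      LinearMap.proj (R := ℂ) (φ := fun _ : V => Fin d → ℂ) i.1) ∘ₗ c
  let Ψ : (LinearMap.ker Φ) →ₗ[ℂ] ({i : V // μ i = 0} → (Fin d → ℂ)) :=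
    (LinearMap.pi fun i : {i : V // μ i = 0} =>
      LinearMap.proj (R := ℂ) (φ := fun _ : V => Fin d → ℂ) i.1) ∘ₗ c ∘ₗ (LinearMap.ker Φ).subtype
  have hkerΨ : LinearMap.ker Ψ = ⊥ := by
    refine (Submodule.eq_bot_iff _).mpr fun g hg' => ?_
    have hg : Ψ g = 0 := LinearMap.mem_ker.mp hg'
    have hgk : Φ g.1 = 0 := LinearMap.mem_ker.mp g.2
    have hall : ∀ i : V, c g.1 i = 0 := by
      intro i
      by_cases hz : μ i = 0
      · exact congr_fun hg ⟨i, hz⟩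
      · refine hker g.1 (fun k hk => ?_) i hz
        exact congr_fun hgk ⟨k, hk⟩
    have hcg : c g.1 = 0 := by ext i j; exact congr_fun (hall i) j
    have hFg : F g.1 = 0 := by
      have h' : U * (Uᴴ * F g.1) = U * (0 : Matrix V (Fin d) ℂ) := by
        rw [← hcF, hcg]
      rwa [← Matrix.mul_assoc, hU2, Matrix.one_mul, Matrix.mul_zero] at h'
    have hg1 : g.1 = 0 := by
      funext u
      apply Subtype.ext
      funext j
      exact congr_fun (congr_fun hFg u) j
    exact Subtype.ext hg1
  have hΨ : Function.Injective Ψ := by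
    intro a b hab
    have hm : a - b ∈ LinearMap.ker Ψ := by
      rw [LinearMap.mem_ker]; exact (map_sub Ψ a b).trans (by rw [hab, sub_self])
    rw [hkerΨ, Submodule.mem_bot] at hm
    exact Subtype.ext (sub_eq_zero.mp (congrArg Subtype.val hm))
  have hrank : ∑ u : V, Module.finrank ℂ (S u) = Module.finrank ℂ (∀ u : V, S u) :=
    (Module.finrank_pi_fintype ℂ).symm
  have h1 : Module.finrank ℂ (∀ u : V, S u)
      = Module.finrank ℂ (LinearMap.range Φ) + Module.finrank ℂ (LinearMap.ker Φ) :=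
    (LinearMap.finrank_range_add_finrank_ker Φ).symm
  have h2 : Module.finrank ℂ (LinearMap.range Φ)
      ≤ Module.finrank ℂ ({i : V // 0 < ε * μ i} → (Fin d → ℂ)) :=
    Submodule.finrank_le _
  have h3 : Module.finrank ℂ (LinearMap.ker Φ)
      ≤ Module.finrank ℂ ({i : V // μ i = 0} → (Fin d → ℂ)) :=
    LinearMap.finrank_le_finrank_of_injective hΨ
  have hp1 : Module.finrank ℂ ({i : V // 0 < ε * μ i} → (Fin d → ℂ))
      = (univ.filter fun i : V => 0 < ε * μ i).card * d := by
    rw [Module.finrank_pi_fintype ℂ]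
    simp [Module.finrank_pi, Fintype.card_subtype]
  have hp0 : Module.finrank ℂ ({i : V // μ i = 0} → (Fin d → ℂ))
      = (univ.filter fun i : V => μ i = 0).card * d := by
    rw [Module.finrank_pi_fintype ℂ]
    simp [Module.finrank_pi, Fintype.card_subtype]
  calc ∑ u : V, Module.finrank ℂ (S u)
      = Module.finrank ℂ (LinearMap.range Φ) + Module.finrank ℂ (LinearMap.ker Φ) := by
        rw [hrank, h1]
    _ ≤ (univ.filter fun i : V => 0 < ε * μ i).card * d
        + (univ.filter fun i : V => μ i = 0).card * d := by
        have := hp1 ▸ h2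
        have := hp0 ▸ h3
        omega
    _ = d * ((univ.filter fun i : V => μ i = 0).card
        + (univ.filter fun i : V => 0 < ε * μ i).card) := by ring

set_option maxHeartbeats 1000000 in
/-- inertia bound for projective packings (case `k = 1`): for any
`d`-dimensional (1-)projective packing `{P⁽ᵘ⁾}` of `G`,
`(1/d) Σ_u rank(P⁽ᵘ⁾) ≤ n⁰(A) + min{n⁺(A), n⁻(A)}` where `A` is the adjacency
matrix of `G`. -/
theorem projectivePacking_inertia_bound {V : Type*} [Fintype V] [DecidableEq V]
    (G : SimpleGraph V) [DecidableRel G.Adj]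
    (hA : (G.adjMatrix ℝ).IsHermitian)
    (d : ℕ) (hd : 0 < d) (P : V → Matrix (Fin d) (Fin d) ℂ)
    (hproj : ∀ u, (P u).IsHermitian ∧ P u * P u = P u)
    (horth : ∀ u v, G.Adj u v → Matrix.trace (P u * P v) = 0) :
    ((∑ u : V, (P u).rank : ℕ) : ℝ) / (d : ℝ) ≤
      ((univ.filter fun i : V => hA.eigenvalues i = 0).card +
        min (univ.filter fun i : V => 0 < hA.eigenvalues i).card
            (univ.filter fun i : V => hA.eigenvalues i < 0).card : ℕ) := by
  classical
  set A : Matrix V V ℝ := G.adjMatrix ℝ with hAdef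
  set μ : V → ℝ := hA.eigenvalues with hμ
  set Ur : Matrix V V ℝ := (hA.eigenvectorUnitary : Matrix V V ℝ) with hUr
  set U : Matrix V V ℂ := Ur.map Complex.ofReal with hU
  have hU2 : U * Uᴴ = 1 := by
    rw [hU, map_ofReal_conjTranspose,
      show (Complex.ofReal : ℝ → ℂ) = ⇑Complex.ofRealHom from rfl,
      ← Matrix.map_mul (f := Complex.ofRealHom)]
    rw [show Ur * star Ur = 1 from Unitary.coe_mul_star_self hA.eigenvectorUnitary]
    exact Matrix.map_one _ (by simp) (by simp)
  set B : Matrix V V ℂ := A.map Complex.ofReal with hBdef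
  have hB : B = U * Matrix.diagonal (fun i => ((μ i : ℝ) : ℂ)) * Uᴴ := by
    have hsp : A = Ur * Matrix.diagonal hA.eigenvalues * star Ur := by
      have := hA.spectral_theorem
      rw [RCLike.ofReal_real_eq_id] at this
      simpa using this
    rw [hBdef, hU, map_ofReal_conjTranspose,
      show (Complex.ofReal : ℝ → ℂ) = ⇑Complex.ofRealHom from rfl]
    conv_lhs => rw [hsp]
    rw [Matrix.map_mul (f := Complex.ofRealHom), Matrix.map_mul (f := Complex.ofRealHom),
      Matrix.diagonal_map (show Complex.ofRealHom 0 = 0 by simp)]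
  -- the subspaces
  set S : V → Submodule ℂ (Fin d → ℂ) := fun u => LinearMap.range (P u).mulVecLin with hS
  have hSrank : ∀ u : V, Module.finrank ℂ (S u) = (P u).rank := fun u => rfl
  -- orthogonality
  have hiso : ∀ (g : ∀ u : V, S u) (u v : V), B u v ≠ 0 →
      star ((g u : Fin d → ℂ)) ⬝ᵥ ((g v : Fin d → ℂ)) = 0 := by
    intro g u v hBuv
    have hadj : G.Adj u v := by
      by_contra hc
      exact hBuv (by simp [hBdef, hAdef, Matrix.map_apply, SimpleGraph.adjMatrix_apply, hc])
    have hpq : P u * P v = 0 :=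
      proj_mul_eq_zero (hproj u).1 (hproj u).2 (hproj v).1 (hproj v).2 (horth u v hadj)
    obtain ⟨x, hx⟩ := (g u).2
    obtain ⟨y, hy⟩ := (g v).2
    rw [← hx, ← hy]
    rw [Matrix.mulVecLin_apply, Matrix.mulVecLin_apply, Matrix.star_mulVec,
      Matrix.dotProduct_mulVec, Matrix.vecMul_vecMul, (hproj u).1.eq, hpq,
      Matrix.vecMul_zero, zero_dotProduct]
  -- the two inertia bounds
  have hbound : ∀ ε : ℝ, ε = 1 ∨ ε = -1 → ∑ u : V, (P u).rank ≤
      d * ((univ.filter fun i : V => μ i = 0).card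
        + (univ.filter fun i : V => 0 < ε * μ i).card) := by
    intro ε hε
    have := dim_bound d S U μ hU2 B hB ε hε hiso
    simpa [hSrank] using this
  have hb1 : ∑ u : V, (P u).rank ≤
      d * ((univ.filter fun i : V => μ i = 0).card
        + (univ.filter fun i : V => 0 < μ i).card) := by
    have := hbound 1 (Or.inl rfl)
    rwa [Finset.filter_congr (fun i _ => by rw [one_mul] : ∀ i ∈ univ,
      (0 < (1:ℝ) * μ i ↔ 0 < μ i))] at this
  have hb2 : ∑ u : V, (P u).rank ≤
      d * ((univ.filter fun i : V => μ i = 0).card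
        + (univ.filter fun i : V => μ i < 0).card) := by
    have := hbound (-1) (Or.inr rfl)
    rwa [Finset.filter_congr (fun i _ => by rw [neg_one_mul, neg_pos] : ∀ i ∈ univ,
      (0 < (-1:ℝ) * μ i ↔ μ i < 0))] at this
  have hfin : ∑ u : V, (P u).rank ≤
      d * ((univ.filter fun i : V => μ i = 0).card
        + min (univ.filter fun i : V => 0 < μ i).card
              (univ.filter fun i : V => μ i < 0).card) := by
    rcases le_total (univ.filter fun i : V => 0 < μ i).card
        (univ.filter fun i : V => μ i < 0).card with h | h
    · rwa [min_eq_left h]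
    · rwa [min_eq_right h]
  rw [div_le_iff₀ (by exact_mod_cast hd : (0:ℝ) < (d:ℝ))]
  calc ((∑ u : V, (P u).rank : ℕ) : ℝ)
      ≤ ((d * ((univ.filter fun i : V => μ i = 0).card
        + min (univ.filter fun i : V => 0 < μ i).card
              (univ.filter fun i : V => μ i < 0).card) : ℕ) : ℝ) := by exact_mod_cast hfin
    _ = ((((univ.filter fun i : V => μ i = 0).card
        + min (univ.filter fun i : V => 0 < μ i).card
              (univ.filter fun i : V => μ i < 0).card : ℕ)) : ℝ) * (d : ℝ) := by
        push_cast; ring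
end

section
/- Suppose there exist orthogonal projectors P^{(u,i)} ∈ ℂ^{d×d} for u ∈ V(G), i ∈ [t], satisfying: Σ_{u∈V} P^{(u,i)} = I_d for each i; tr(P^{(u,i)}P^{(u,j)}) = 0 for i ≠ j; and tr(P^{(u,i)}P^{(v,j)}) = 0 for i ≠ j whenever u ≠ v are adjacent. Then for each u the projectors {P^{(u,i)}}_i are mutually orthogonal, so Q^{(u)} = Σ_{i∈[t]} P^{(u,i)} is an orthogonal projector, and the family {Q^{(u)}} satisfies Σ_u rank(Q^{(u)}) = t·d, i.e., gives a projective packing of value t; hence α_q(G) ≤ α_p(G). -/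
open Matrix Finset

lemma trace_hermitian_sq {d : ℕ} (X : Matrix (Fin d) (Fin d) ℂ) :
    Matrix.trace (Xᴴ * X) = ((∑ i, ∑ j, Complex.normSq (X j i) : ℝ) : ℂ) := by
  simp only [Matrix.trace, Matrix.diag_apply, Matrix.mul_apply, Matrix.conjTranspose_apply]
  push_cast
  refine Finset.sum_congr rfl fun i _ => Finset.sum_congr rfl fun j _ => ?_
  rw [Complex.normSq_eq_conj_mul_self]
  rfl

lemma proj_trace_eq_real {d : ℕ} {A B : Matrix (Fin d) (Fin d) ℂ}
    (hA : A.IsHermitian ∧ A * A = A) (hB : B.IsHermitian ∧ B * B = B) :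
    Matrix.trace (A * B) = ((∑ i, ∑ j, Complex.normSq ((A * B) j i) : ℝ) : ℂ) := by
  rw [← trace_hermitian_sq, Matrix.conjTranspose_mul, hA.1.eq, hB.1.eq]
  have e1 : (B * A) * (A * B) = B * (A * B) := by
    rw [mul_assoc, ← mul_assoc A A B, hA.2]
  rw [e1]
  conv_rhs => rw [Matrix.trace_mul_comm, mul_assoc, hB.2]

lemma proj_mul_eq_zero_s13 {d : ℕ} {A B : Matrix (Fin d) (Fin d) ℂ}
    (hA : A.IsHermitian ∧ A * A = A) (hB : B.IsHermitian ∧ B * B = B)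
    (h : Matrix.trace (A * B) = 0) : A * B = 0 := by
  rw [proj_trace_eq_real hA hB] at h
  have h' : (∑ i, ∑ j, Complex.normSq ((A * B) j i) : ℝ) = 0 := by exact_mod_cast h
  have hz : ∀ i ∈ Finset.univ, ∀ j ∈ Finset.univ, Complex.normSq ((A * B) j i) = 0 := by
    intro i _ j _
    have := (Finset.sum_eq_zero_iff_of_nonneg (fun i _ =>
      Finset.sum_nonneg fun j _ => Complex.normSq_nonneg _)).mp h' i (Finset.mem_univ i)
    exact (Finset.sum_eq_zero_iff_of_nonneg (fun j _ => Complex.normSq_nonneg _)).mp this j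
      (Finset.mem_univ j)
  ext j i
  simpa using Complex.normSq_eq_zero.mp (hz i (Finset.mem_univ i) j (Finset.mem_univ j))

lemma rank_eq_trace_of_proj {d : ℕ} {A : Matrix (Fin d) (Fin d) ℂ}
    (h : A * A = A) : (A.rank : ℂ) = Matrix.trace A := by
  have hf : A.mulVecLin ∘ₗ A.mulVecLin = A.mulVecLin := by
    rw [← Matrix.mulVecLin_mul, h]
  have hp : LinearMap.IsProj (LinearMap.range A.mulVecLin) A.mulVecLin := by
    refine ⟨fun x => LinearMap.mem_range_self _ x, ?_⟩
    rintro x ⟨y, rfl⟩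
    exact LinearMap.congr_fun hf y
  have ht := hp.trace
  rw [LinearMap.trace_eq_matrix_trace ℂ (Pi.basisFun ℂ (Fin d)) A.mulVecLin,
    show (LinearMap.toMatrix (Pi.basisFun ℂ (Fin d)) (Pi.basisFun ℂ (Fin d))) A.mulVecLin = A
      from LinearMap.toMatrix'_toLin' A] at ht
  have hr : A.rank = Module.finrank ℂ (LinearMap.range A.mulVecLin) := rfl
  rw [hr, ← ht]


/-- The projective packing number of a graph: the supremum of the values
`(1/d) Σ_u rank(P⁽ᵘ⁾)` over all `d`-dimensional projective packings. -/
noncomputable def projPackingNum {V : Type*} [Fintype V] (G : SimpleGraph V) : ℝ :=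
  sSup {x : ℝ | ∃ d : ℕ, 0 < d ∧ ∃ P : V → Matrix (Fin d) (Fin d) ℂ,
    (∀ u, (P u).IsHermitian ∧ P u * P u = P u) ∧
    (∀ u v, G.Adj u v → Matrix.trace (P u * P v) = 0) ∧
    x = ((∑ u : V, (P u).rank : ℕ) : ℝ) / (d : ℝ)}

/-- a quantum independent-set strategy of size `t` yields a
projective packing of value `t`: the sums `Q⁽ᵘ⁾ = Σ_i P⁽ᵘ'ⁱ⁾` are orthogonal
projectors forming a projective packing with `Σ_u rank(Q⁽ᵘ⁾) = t·d`; hence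
`α_q(G) ≤ α_p(G)`. -/
theorem quantum_strategy_gives_projectivePacking {V : Type*} [Fintype V]
    (G : SimpleGraph V) (t d : ℕ) (hd : 0 < d)
    (P : V → Fin t → Matrix (Fin d) (Fin d) ℂ)
    (hproj : ∀ u i, (P u i).IsHermitian ∧ P u i * P u i = P u i)
    (hsum : ∀ i, ∑ u : V, P u i = (1 : Matrix (Fin d) (Fin d) ℂ))
    (hconsist : ∀ u, ∀ i j, i ≠ j → Matrix.trace (P u i * P u j) = 0)
    (hadj : ∀ u v, ∀ i j, G.Adj u v → i ≠ j →
      Matrix.trace (P u i * P v j) = 0) :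
    (∀ u, ((∑ i, P u i).IsHermitian ∧ (∑ i, P u i) * (∑ i, P u i) = ∑ i, P u i)) ∧
    (∀ u v, G.Adj u v → Matrix.trace ((∑ i, P u i) * (∑ i, P v i)) = 0) ∧
    (∑ u : V, (∑ i, P u i).rank = t * d) ∧
    (t : ℝ) ≤ projPackingNum G := by
  classical
  -- Q u is an orthogonal projector
  have hQproj : ∀ u, ((∑ i, P u i).IsHermitian ∧
      (∑ i, P u i) * (∑ i, P u i) = ∑ i, P u i) := by
    intro u
    constructor
    · unfold Matrix.IsHermitian
      rw [Matrix.conjTranspose_sum]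
      exact Finset.sum_congr rfl fun i _ => (hproj u i).1.eq
    · rw [Finset.sum_mul_sum]
      refine Finset.sum_congr rfl fun i _ => ?_
      rw [Finset.sum_eq_single i (fun j _ hji => proj_mul_eq_zero_s13 (hproj u i) (hproj u j)
        (hconsist u i j hji.symm)) (fun h => absurd (Finset.mem_univ i) h)]
      exact (hproj u i).2
  -- resolution of identity forces orthogonality of same-index projectors at distinct vertices
  have hdiag : ∀ (i : Fin t) (u v : V), u ≠ v → Matrix.trace (P u i * P v i) = 0 := by
    intro i u v huv
    set g : V → V → ℝ := fun u v => ∑ a, ∑ b, Complex.normSq ((P u i * P v i) b a) with hgdef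
    have hg : ∀ u v, Matrix.trace (P u i * P v i) = ((g u v : ℝ) : ℂ) :=
      fun u v => proj_trace_eq_real (hproj u i) (hproj v i)
    have hgnn : ∀ u v, 0 ≤ g u v := fun u v =>
      Finset.sum_nonneg fun a _ => Finset.sum_nonneg fun b _ => Complex.normSq_nonneg _
    have h1 : ((∑ u, ∑ v, g u v : ℝ) : ℂ) = (d : ℂ) := by
      push_cast
      calc (∑ u, ∑ v, ((g u v : ℝ) : ℂ)) = ∑ u, ∑ v, Matrix.trace (P u i * P v i) := by
            exact Finset.sum_congr rfl fun u _ => Finset.sum_congr rfl fun v _ => (hg u v).symm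
        _ = Matrix.trace ((∑ u, P u i) * (∑ v, P v i)) := by
            rw [Finset.sum_mul_sum]
            simp [Matrix.trace_sum]
        _ = (d : ℂ) := by rw [hsum i, one_mul, Matrix.trace_one]; simp
    have h2 : ((∑ u, g u u : ℝ) : ℂ) = (d : ℂ) := by
      push_cast
      calc (∑ u, ((g u u : ℝ) : ℂ)) = ∑ u, Matrix.trace (P u i * P u i) := by
            exact Finset.sum_congr rfl fun u _ => (hg u u).symm
        _ = ∑ u, Matrix.trace (P u i) := by
            exact Finset.sum_congr rfl fun u _ => by rw [(hproj u i).2]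
        _ = Matrix.trace (∑ u, P u i) := by rw [Matrix.trace_sum]
        _ = (d : ℂ) := by rw [hsum i, Matrix.trace_one]; simp
    have hreq : (∑ u, ∑ v, g u v : ℝ) = ∑ u, g u u := by
      have := h1.trans h2.symm
      exact_mod_cast this
    have hrow : ∀ w : V, ∑ v, g w v = g w w := by
      have hle : ∀ w ∈ Finset.univ, g w w ≤ ∑ v, g w v := fun w _ =>
        Finset.single_le_sum (fun v _ => hgnn w v) (Finset.mem_univ w)
      intro w
      by_contra hne
      have hlt : g w w < ∑ v, g w v :=
        lt_of_le_of_ne (hle w (Finset.mem_univ w)) fun h => hne h.symm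
      have : ∑ u, g u u < ∑ u, ∑ v, g u v :=
        Finset.sum_lt_sum hle ⟨w, Finset.mem_univ w, hlt⟩
      exact absurd hreq (ne_of_gt this)
    have : ∑ v ∈ Finset.univ.erase u, g u v = 0 := by
      have := Finset.add_sum_erase Finset.univ (g u) (Finset.mem_univ u)
      have h := hrow u
      rw [← this] at h
      linarith
    have hz := (Finset.sum_eq_zero_iff_of_nonneg (fun v _ => hgnn u v)).mp this v
      (Finset.mem_erase.mpr ⟨huv.symm, Finset.mem_univ v⟩)
    rw [hg u v, hz, Complex.ofReal_zero]
  -- orthogonality of the Q's on edges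
  have hQorth : ∀ u v, G.Adj u v → Matrix.trace ((∑ i, P u i) * (∑ i, P v i)) = 0 := by
    intro u v huv
    rw [Finset.sum_mul_sum]
    rw [Matrix.trace_sum]
    refine Finset.sum_eq_zero fun i _ => ?_
    rw [Matrix.trace_sum]
    refine Finset.sum_eq_zero fun j _ => ?_
    rcases eq_or_ne i j with rfl | hij
    · exact hdiag i u v huv.ne
    · exact hadj u v i j huv hij
  -- sum of ranks
  have hrank : ∑ u : V, (∑ i, P u i).rank = t * d := by
    have hc : ((∑ u : V, (∑ i, P u i).rank : ℕ) : ℂ) = ((t * d : ℕ) : ℂ) := by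
      push_cast
      calc (∑ u : V, ((((∑ i, P u i).rank : ℕ)) : ℂ))
          = ∑ u : V, Matrix.trace (∑ i, P u i) :=
            Finset.sum_congr rfl fun u _ => rank_eq_trace_of_proj (hQproj u).2
        _ = ∑ u : V, ∑ i, Matrix.trace (P u i) := by simp [Matrix.trace_sum]
        _ = ∑ i, ∑ u : V, Matrix.trace (P u i) := Finset.sum_comm
        _ = ∑ i : Fin t, (d : ℂ) := by
            refine Finset.sum_congr rfl fun i _ => ?_
            rw [← Matrix.trace_sum, hsum i, Matrix.trace_one]
            simp
        _ = (t : ℂ) * (d : ℂ) := by simp [Finset.sum_const, mul_comm]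
    exact_mod_cast hc
  refine ⟨hQproj, hQorth, hrank, ?_⟩
  -- membership
  have hmem : (t : ℝ) ∈ {x : ℝ | ∃ d : ℕ, 0 < d ∧ ∃ P : V → Matrix (Fin d) (Fin d) ℂ,
      (∀ u, (P u).IsHermitian ∧ P u * P u = P u) ∧
      (∀ u v, G.Adj u v → Matrix.trace (P u * P v) = 0) ∧
      x = ((∑ u : V, (P u).rank : ℕ) : ℝ) / (d : ℝ)} := by
    refine ⟨d, hd, fun u => ∑ i, P u i, hQproj, hQorth, ?_⟩
    rw [hrank]
    push_cast
    field_simp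
  have hbdd : BddAbove {x : ℝ | ∃ d : ℕ, 0 < d ∧ ∃ P : V → Matrix (Fin d) (Fin d) ℂ,
      (∀ u, (P u).IsHermitian ∧ P u * P u = P u) ∧
      (∀ u v, G.Adj u v → Matrix.trace (P u * P v) = 0) ∧
      x = ((∑ u : V, (P u).rank : ℕ) : ℝ) / (d : ℝ)} := by
    refine ⟨(Fintype.card V : ℝ), ?_⟩
    rintro x ⟨d', hd', Q, hQ, _, rfl⟩
    rw [div_le_iff₀ (by exact_mod_cast hd')]
    have hb : ∑ u : V, (Q u).rank ≤ Fintype.card V * d' := by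
      calc ∑ u : V, (Q u).rank ≤ ∑ _u : V, d' :=
            Finset.sum_le_sum fun u _ => by
              simpa using (Q u).rank_le_card_width
        _ = Fintype.card V * d' := by simp [Finset.sum_const, mul_comm]
    exact_mod_cast hb
  exact le_csSup hbdd hmem
end

section
/- Let M be an n×n Hermitian matrix and S an n×m matrix with orthonormal columns (S†S = I_m). If S†MS = D is diagonal with all diagonal entries ≥ w, then M has at least m eigenvalues (with multiplicity) that are ≥ w. -/
open Matrix Finset

/-- interlacing-type bound.  If `S` has orthonormal columns
(`Sᴴ S = I_m`) and `Sᴴ M S` is diagonal with all diagonal entries `≥ w`, then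
the Hermitian matrix `M` has at least `m` eigenvalues (with multiplicity)
that are `≥ w`. -/
theorem eigenvalue_count_of_compression_diagonal {n m : ℕ}
    (M : Matrix (Fin n) (Fin n) ℂ) (hM : M.IsHermitian)
    (S : Matrix (Fin n) (Fin m) ℂ) (hS : Sᴴ * S = 1)
    (w : ℝ)
    (hdiagonal : ∀ i j : Fin m, i ≠ j → (Sᴴ * M * S) i j = 0)
    (hdiag : ∀ i : Fin m, ((Sᴴ * M * S) i i).im = 0 ∧ w ≤ ((Sᴴ * M * S) i i).re) :
    m ≤ (univ.filter fun i : Fin n => w ≤ hM.eigenvalues i).card := by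
  by_contra hcon
  push_neg at hcon
  set P : Finset (Fin n) := univ.filter fun i : Fin n => w ≤ hM.eigenvalues i with hP
  set u : Matrix (Fin n) (Fin n) ℂ := (hM.eigenvectorUnitary : Matrix (Fin n) (Fin n) ℂ) with hu
  set T : Matrix (Fin n) (Fin m) ℂ := star u * S with hT
  have hTc : Tᴴ = Sᴴ * u := by
    rw [hT]; rw [conjTranspose_mul]
    congr 1
    simp [star_eq_conjTranspose]
  have huu : u * star u = 1 := (Matrix.mem_unitaryGroup_iff).mp hM.eigenvectorUnitary.2
  have hTT : Tᴴ * T = 1 := by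
    rw [hTc, hT, Matrix.mul_assoc, ← Matrix.mul_assoc u, huu, Matrix.one_mul, hS]
  -- nonzero kernel vector
  set L : (Fin m → ℂ) →ₗ[ℂ] ({ i // i ∈ P } → ℂ) :=
    (LinearMap.funLeft ℂ ℂ (Subtype.val)).comp (Matrix.mulVecLin T) with hL
  have hLni : ¬ Function.Injective L := by
    intro hinj
    have h1 := LinearMap.finrank_le_finrank_of_injective hinj
    rw [Module.finrank_fintype_fun_eq_card, Module.finrank_fintype_fun_eq_card,
      Fintype.card_fin, Fintype.card_coe] at h1
    omega
  rw [Function.not_injective_iff] at hLni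
  obtain ⟨a, b, hab, hne⟩ := hLni
  set c : Fin m → ℂ := a - b with hc
  have hc0 : c ≠ 0 := sub_ne_zero.mpr hne
  have hLc : L c = 0 := by rw [hc, map_sub, hab, sub_self]
  set x : Fin n → ℂ := T *ᵥ c with hx
  have hxP : ∀ i ∈ P, x i = 0 := by
    intro i hi
    have := congrFun hLc ⟨i, hi⟩
    simpa [hL, Matrix.mulVecLin, hx] using this
  set D : Matrix (Fin n) (Fin n) ℂ := diagonal (Complex.ofReal ∘ hM.eigenvalues) with hD
  have hkey : Sᴴ * M * S = Tᴴ * D * T := by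
    conv_lhs => rw [hM.spectral_theorem]
    rw [hTc, hT, hD]
    simp only [Matrix.mul_assoc]
    rw [Unitary.conjStarAlgAut_apply]
    simp only [Matrix.mul_assoc]
    rfl
  -- quadratic form computations
  have hA : star c ⬝ᵥ ((Sᴴ * M * S) *ᵥ c)
      = ∑ j, (Sᴴ * M * S) j j * (Complex.normSq (c j) : ℂ) := by
    simp only [dotProduct, mulVec, dotProduct]
    refine Finset.sum_congr rfl fun j _ => ?_
    rw [Finset.sum_eq_single j]
    · rw [Complex.normSq_eq_conj_mul_self]; simp [Pi.star_apply]; ring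
    · intro k _ hk; rw [hdiagonal j k (Ne.symm hk)]; ring
    · simp
  have hB : star c ⬝ᵥ ((Sᴴ * M * S) *ᵥ c)
      = ∑ i, (hM.eigenvalues i : ℂ) * (Complex.normSq (x i) : ℂ) := by
    rw [hkey, ← Matrix.mulVec_mulVec, ← Matrix.mulVec_mulVec,
      Matrix.dotProduct_mulVec, ← Matrix.star_mulVec]
    rw [hT, ← hx]
    simp only [hD, dotProduct, mulVec_diagonal, Pi.star_apply, Function.comp_apply]
    refine Finset.sum_congr rfl fun i _ => ?_
    rw [Complex.normSq_eq_conj_mul_self]; simp; ring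
  have hCc : (∑ i, Complex.normSq (x i)) = ∑ j, Complex.normSq (c j) := by
    have h1 : star c ⬝ᵥ ((Tᴴ * T) *ᵥ c) = ∑ i, (Complex.normSq (x i) : ℂ) := by
      rw [← Matrix.mulVec_mulVec, Matrix.dotProduct_mulVec, ← Matrix.star_mulVec, ← hx]
      simp only [dotProduct, Pi.star_apply]
      exact Finset.sum_congr rfl fun i _ => (Complex.normSq_eq_conj_mul_self).symm
    have h2 : star c ⬝ᵥ ((Tᴴ * T) *ᵥ c) = ∑ j, (Complex.normSq (c j) : ℂ) := by
      rw [hTT, Matrix.one_mulVec]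
      simp only [dotProduct, Pi.star_apply]
      exact Finset.sum_congr rfl fun j _ => (Complex.normSq_eq_conj_mul_self).symm
    have := h1.symm.trans h2
    push_cast at this
    exact_mod_cast this
  -- real parts
  have hAB : (∑ j, ((Sᴴ * M * S) j j).re * Complex.normSq (c j))
      = ∑ i, hM.eigenvalues i * Complex.normSq (x i) := by
    have h := congrArg Complex.re (hA.symm.trans hB)
    rw [Complex.re_sum, Complex.re_sum] at h
    calc (∑ j, ((Sᴴ * M * S) j j).re * Complex.normSq (c j))
        = ∑ j, ((Sᴴ * M * S) j j * (Complex.normSq (c j) : ℂ)).re :=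
          Finset.sum_congr rfl fun j _ => by
            rw [Complex.mul_re]; simp [(hdiag j).1]
      _ = ∑ i, ((hM.eigenvalues i : ℂ) * (Complex.normSq (x i) : ℂ)).re := h
      _ = ∑ i, hM.eigenvalues i * Complex.normSq (x i) :=
          Finset.sum_congr rfl fun i _ => by
            rw [← Complex.ofReal_mul]; simp
  have hs : 0 < ∑ j, Complex.normSq (c j) := by
    obtain ⟨j, hj⟩ := Function.ne_iff.mp hc0
    exact Finset.sum_pos' (fun j _ => Complex.normSq_nonneg _)
      ⟨j, Finset.mem_univ j, Complex.normSq_pos.mpr hj⟩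
  have hx0 : ∃ i₀ : Fin n, x i₀ ≠ 0 := by
    by_contra hall
    push_neg at hall
    rw [← hCc] at hs
    simp [hall] at hs
  obtain ⟨i₀, hi₀⟩ := hx0
  have hi₀P : i₀ ∉ P := fun hmem => hi₀ (hxP i₀ hmem)
  have hlt : hM.eigenvalues i₀ < w := by
    rw [hP] at hi₀P
    simpa using hi₀P
  have hstrict : (∑ i, hM.eigenvalues i * Complex.normSq (x i))
      < ∑ i : Fin n, w * Complex.normSq (x i) := by
    apply Finset.sum_lt_sum
    · intro i _
      by_cases hiP : i ∈ P
      · rw [hxP i hiP]; simp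
      · have : hM.eigenvalues i < w := by rw [hP] at hiP; simpa using hiP
        exact mul_le_mul_of_nonneg_right this.le (Complex.normSq_nonneg _)
    · exact ⟨i₀, Finset.mem_univ i₀,
        mul_lt_mul_of_pos_right hlt (Complex.normSq_pos.mpr hi₀)⟩
  have hge : w * (∑ j, Complex.normSq (c j))
      ≤ ∑ j, ((Sᴴ * M * S) j j).re * Complex.normSq (c j) := by
    rw [Finset.mul_sum]
    exact Finset.sum_le_sum fun j _ =>
      mul_le_mul_of_nonneg_right (hdiag j).2 (Complex.normSq_nonneg _)
  rw [← Finset.mul_sum, hCc] at hstrict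
  linarith [hge, hAB ▸ hge, hstrict]
end
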